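/- arXiv:1811.10062 — 4 statements merged into one kernel-verified Lean document; each statement's English description precedes it below -/
import Mathlib

section
/- Let f ∈ ℝ[X] be a sum of squares, say f = Σ_{i=1}^r s_i² with s_1,…,s_r ∈ ℝ[X], and let P := C(f) be the Newton polytope of f. Then for every i = 1,…,r, the Newton polytope of s_i is contained in P/2; equivalently, every exponent vector α in the support of s_i satisfies 2α ∈ P (viewing α as a point of ℝⁿ). -/
/-!
Let `W` be the convex hull of the exponent vectors of all the `sᵢ`. If `σ` is a vertex of `W`,
the only way to write `σ + σ = β + γ` with exponents `β, γ` of some `sᵢ` is `β = γ = σ`, so the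
coefficient of `X^(2σ)` in `∑ sᵢ²` is `∑ (coeff σ sᵢ)² > 0` and `2σ` lies in the support of `f`.
As `W` is the convex hull of its vertices, `2 • W ⊆ C(f)`.
-/

open MvPolynomial

noncomputable section

/-- The Newton polytope of `f`: the convex hull in `ℝⁿ` of the exponent vectors of the
monomials occurring in `f`. -/
def newtonPolytope {n : ℕ} (f : MvPolynomial (Fin n) ℝ) : Set (Fin n → ℝ) :=
  convexHull ℝ ((fun σ : Fin n →₀ ℕ => fun i => (σ i : ℝ)) '' (f.support : Set (Fin n →₀ ℕ)))

open Pointwise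

section ExtremePoints

variable {E : Type*} [AddCommGroup E] [Module ℝ E]

theorem eq_of_add_eq_add_self_of_mem_extremePoints {W : Set E} {x y z : E}
    (hx : x ∈ W.extremePoints ℝ) (hy : y ∈ W) (hz : z ∈ W) (h : y + z = x + x) : y = x := by
  refine hx.2 hy hz ?_
  have hmid : midpoint ℝ y z = x := by
    rw [midpoint_eq_smul_add, h, ← two_smul ℝ x, smul_smul, invOf_mul_self, one_smul]
  exact hmid ▸ midpoint_mem_openSegment y z

variable [TopologicalSpace E] [T2Space E] [IsTopologicalAddGroup E] [ContinuousSMul ℝ E]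
  [LocallyConvexSpace ℝ E]

theorem Set.Finite.convexHull_extremePoints_convexHull {A : Set E} (hA : A.Finite) :
    convexHull ℝ ((convexHull ℝ A).extremePoints ℝ) = convexHull ℝ A := by
  have hext : ((convexHull ℝ A).extremePoints ℝ).Finite := hA.subset extremePoints_convexHull_subset
  simpa only [(hext.isCompact_convexHull ℝ).isClosed.closure_eq] using
    closure_convexHull_extremePoints (hA.isCompact_convexHull ℝ) (convex_convexHull ℝ A)

theorem smul_convexHull_subset_of_smul_extremePoints_subset {A P : Set E} (hA : A.Finite)
    (hP : Convex ℝ P) (c : ℝ) (h : ∀ x ∈ (convexHull ℝ A).extremePoints ℝ, c • x ∈ P) :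
    c • convexHull ℝ A ⊆ P := by
  rw [← hA.convexHull_extremePoints_convexHull, ← convexHull_smul]
  exact convexHull_min (Set.smul_set_subset_iff.2 h) hP

end ExtremePoints

namespace MvPolynomial

variable {ι R : Type*}

theorem coeff_add_self_sq [CommSemiring R] (p : MvPolynomial ι R) (σ : ι →₀ ℕ)
    (h : ∀ β ∈ p.support, ∀ γ ∈ p.support, β + γ = σ + σ → β = σ) :
    coeff (σ + σ) (p ^ 2) = coeff σ p ^ 2 := by
  classical
  rw [sq, sq, coeff_mul, Finset.sum_eq_single (σ, σ)]
  · rintro ⟨β, γ⟩ hβγ hne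
    rw [Finset.HasAntidiagonal.mem_antidiagonal] at hβγ
    by_contra hprod
    have hβ : β = σ := h β (mem_support_iff.2 (left_ne_zero_of_mul hprod)) γ
      (mem_support_iff.2 (right_ne_zero_of_mul hprod)) hβγ
    subst hβ
    exact hne (Prod.ext rfl (add_left_cancel hβγ))
  · simp

theorem add_self_mem_support_sum_sq [CommRing R] [LinearOrder R] [IsStrictOrderedRing R]
    {κ : Type*} [Fintype κ] (s : κ → MvPolynomial ι R) (σ : ι →₀ ℕ)
    (h : ∀ i, ∀ β ∈ (s i).support, ∀ γ ∈ (s i).support, β + γ = σ + σ → β = σ)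
    {i : κ} (hσ : σ ∈ (s i).support) :
    σ + σ ∈ (∑ i, s i ^ 2).support := by
  have hcoeff : coeff (σ + σ) (∑ i, s i ^ 2) = ∑ i, coeff σ (s i) ^ 2 := by
    rw [coeff_sum]
    exact Finset.sum_congr rfl fun i _ => coeff_add_self_sq (s i) σ (h i)
  rw [mem_support_iff, hcoeff]
  refine (Finset.sum_pos' (fun i _ => sq_nonneg _) ⟨i, Finset.mem_univ i, ?_⟩).ne'
  exact sq_pos_of_ne_zero (mem_support_iff.1 hσ)

end MvPolynomial

section NewtonPolytope

variable {ι : Type*}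

def exponentVector (σ : ι →₀ ℕ) : ι → ℝ := fun i => σ i

theorem exponentVector_injective : Function.Injective (exponentVector (ι := ι)) :=
  fun _ _ h => Finsupp.ext fun i => Nat.cast_injective (congrFun h i)

theorem exponentVector_add (σ τ : ι →₀ ℕ) :
    exponentVector (σ + τ) = exponentVector σ + exponentVector τ := by
  ext i
  simp [exponentVector]

theorem newtonPolytope_eq_convexHull {n : ℕ} (f : MvPolynomial (Fin n) ℝ) :
    newtonPolytope f = convexHull ℝ (exponentVector '' (f.support : Set (Fin n →₀ ℕ))) :=
  rfl

theorem eq_of_add_eq_add_self_of_mem_extremePoints_convexHull {S : Set (ι →₀ ℕ)}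
    {σ β γ : ι →₀ ℕ} (hσ : exponentVector σ ∈ (convexHull ℝ (exponentVector '' S)).extremePoints ℝ)
    (hβ : β ∈ S) (hγ : γ ∈ S) (h : β + γ = σ + σ) : β = σ := by
  refine exponentVector_injective (eq_of_add_eq_add_self_of_mem_extremePoints hσ
    (subset_convexHull ℝ _ ⟨β, hβ, rfl⟩) (subset_convexHull ℝ _ ⟨γ, hγ, rfl⟩) ?_)
  rw [← exponentVector_add, ← exponentVector_add, h]

theorem two_smul_mem_newtonPolytope_sum_sq {n : ℕ} {κ : Type*} [Fintype κ]
    (s : κ → MvPolynomial (Fin n) ℝ) {x : Fin n → ℝ}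
    (hx : x ∈ (convexHull ℝ (exponentVector '' ⋃ i, ((s i).support : Set _))).extremePoints ℝ) :
    (2 : ℝ) • x ∈ newtonPolytope (∑ i, s i ^ 2) := by
  obtain ⟨σ, hσ, rfl⟩ := extremePoints_convexHull_subset hx
  obtain ⟨i, hσi⟩ := Set.mem_iUnion.1 hσ
  have hσσ : σ + σ ∈ (∑ i, s i ^ 2).support :=
    add_self_mem_support_sum_sq s σ (fun j β hβ γ hγ =>
      eq_of_add_eq_add_self_of_mem_extremePoints_convexHull hx
        (Set.mem_iUnion.2 ⟨j, hβ⟩) (Set.mem_iUnion.2 ⟨j, hγ⟩)) hσi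
  rw [newtonPolytope_eq_convexHull, two_smul, ← exponentVector_add]
  exact subset_convexHull ℝ _ ⟨σ + σ, hσσ, rfl⟩

end NewtonPolytope

theorem stmt_1_general {n : ℕ} (f : MvPolynomial (Fin n) ℝ)
    (r : ℕ) (s : Fin r → MvPolynomial (Fin n) ℝ)
    (hf : f = ∑ i, (s i) ^ 2) :
    ∀ i : Fin r, ∀ α ∈ (s i).support,
      (fun j => (2 : ℝ) * (α j : ℝ)) ∈ newtonPolytope f := by
  intro i α hα
  set A := exponentVector '' ⋃ i, ((s i).support : Set (Fin n →₀ ℕ))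
  have hA : A.Finite := (Set.finite_iUnion fun i => (s i).support.finite_toSet).image _
  have hdouble : (2 : ℝ) • convexHull ℝ A ⊆ newtonPolytope f :=
    smul_convexHull_subset_of_smul_extremePoints_subset hA (convex_convexHull ℝ _) 2
      fun x hx => hf ▸ two_smul_mem_newtonPolytope_sum_sq s hx
  have hαA : exponentVector α ∈ convexHull ℝ A :=
    subset_convexHull ℝ A ⟨α, Set.mem_iUnion.2 ⟨i, hα⟩, rfl⟩
  exact hdouble (Set.smul_mem_smul_set hαA)

theorem stmt_1 {n : ℕ} (hn : 1 ≤ n) (f : MvPolynomial (Fin n) ℝ)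
    (r : ℕ) (s : Fin r → MvPolynomial (Fin n) ℝ)
    (hf : f = ∑ i, (s i) ^ 2) :
    ∀ i : Fin r, ∀ α ∈ (s i).support,
      (fun j => (2 : ℝ) * (α j : ℝ)) ∈ newtonPolytope f :=
  stmt_1_general f r s hf
end
end

section
/- Let g_1,…,g_m ∈ ℝ[X], set g_0 := 1 and S := {x ∈ ℝⁿ : g_1(x) ≥ 0, …, g_m(x) ≥ 0}, and assume the quadratic module Q(S) generated by g_1,…,g_m is archimedean. If f ∈ ℝ[X] satisfies f(x) > 0 for all x ∈ S, then f ∈ Q(S); that is, there exist sums of squares σ_0, σ_1, …, σ_m ∈ ℝ[X] such that f = σ_0 + Σ_{j=1}^m σ_j g_j. -/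
open MvPolynomial

noncomputable section

/-- `f` is a sum of squares of polynomials. -/
def IsSOS {n : ℕ} (f : MvPolynomial (Fin n) ℝ) : Prop :=
  ∃ (r : ℕ) (s : Fin r → MvPolynomial (Fin n) ℝ), f = ∑ i, (s i) ^ 2

/-- Membership in the quadratic module generated by `g_1,…,g_m` (with `g_0 := 1`). -/
def InQM {n m : ℕ} (g : Fin m → MvPolynomial (Fin n) ℝ) (f : MvPolynomial (Fin n) ℝ) : Prop :=
  ∃ σ0 : MvPolynomial (Fin n) ℝ, ∃ σ : Fin m → MvPolynomial (Fin n) ℝ,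
    IsSOS σ0 ∧ (∀ j, IsSOS (σ j)) ∧ f = σ0 + ∑ j, σ j * g j

namespace Putinar

variable {n : ℕ}

abbrev A (n : ℕ) := MvPolynomial (Fin n) ℝ

theorem isSOS_zero : IsSOS (0 : A n) := ⟨0, ![], by simp⟩

theorem isSOS_sq (p : A n) : IsSOS (p ^ 2) := ⟨1, ![p], by simp⟩

theorem isSOS_one : IsSOS (1 : A n) := by simpa using isSOS_sq (1 : A n)

theorem isSOS_add {p q : A n} (hp : IsSOS p) (hq : IsSOS q) : IsSOS (p + q) := by
  obtain ⟨r1, s1, rfl⟩ := hp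
  obtain ⟨r2, s2, rfl⟩ := hq
  refine ⟨r1 + r2, Fin.append s1 s2, ?_⟩
  rw [Fin.sum_univ_add]
  simp [Fin.append]

theorem isSOS_mul_sq {p : A n} (hp : IsSOS p) (q : A n) : IsSOS (p * q ^ 2) := by
  obtain ⟨r, s, rfl⟩ := hp
  exact ⟨r, fun i => s i * q, by rw [Finset.sum_mul]; congr 1; ext i; ring⟩

theorem isSOS_mul {p q : A n} (hp : IsSOS p) (hq : IsSOS q) : IsSOS (p * q) := by
  obtain ⟨r, s, rfl⟩ := hq
  induction' (Finset.univ : Finset (Fin r)) using Finset.induction_on with a t ha ih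
  · simpa using isSOS_zero
  · rw [Finset.sum_insert ha, mul_add]
    exact isSOS_add (isSOS_mul_sq hp (s a)) ih

theorem isSOS_const {c : ℝ} (hc : 0 ≤ c) : IsSOS (C c : A n) := by
  have h : c = Real.sqrt c ^ 2 := by
    rw [sq, Real.mul_self_sqrt hc]
  rw [h, C_pow]
  exact isSOS_sq _

theorem isSOS_smul {c : ℝ} (hc : 0 ≤ c) {p : A n} (hp : IsSOS p) : IsSOS (C c * p) :=
  isSOS_mul (isSOS_const hc) hp


/-- Quadratic module structure on a set of polynomials. -/
def QMod (Q : Set (A n)) : Prop :=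
  (1 : A n) ∈ Q ∧ (∀ {a b : A n}, a ∈ Q → b ∈ Q → a + b ∈ Q) ∧
    (∀ {a : A n} (p : A n), a ∈ Q → p ^ 2 * a ∈ Q)

namespace QMod

variable {Q : Set (A n)} (hQ : QMod Q)
include hQ

theorem one : (1 : A n) ∈ Q := hQ.1
theorem add {a b : A n} (ha : a ∈ Q) (hb : b ∈ Q) : a + b ∈ Q := hQ.2.1 ha hb
theorem sq_mul (p : A n) {a : A n} (ha : a ∈ Q) : p ^ 2 * a ∈ Q := hQ.2.2 p ha

theorem sq (p : A n) : p ^ 2 ∈ Q := by simpa using hQ.sq_mul p hQ.one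

theorem zero : (0 : A n) ∈ Q := by simpa using hQ.sq (0 : A n)

theorem sos_mul {s a : A n} (hs : IsSOS s) (ha : a ∈ Q) : s * a ∈ Q := by
  obtain ⟨r, t, rfl⟩ := hs
  rw [Finset.sum_mul]
  induction' (Finset.univ : Finset (Fin r)) using Finset.induction_on with i u hi ih
  · simpa using hQ.zero
  · rw [Finset.sum_insert hi]
    exact hQ.add (hQ.sq_mul (t i) ha) ih

theorem sos {s : A n} (hs : IsSOS s) : s ∈ Q := by simpa using hQ.sos_mul hs hQ.one

theorem const {c : ℝ} (hc : 0 ≤ c) : (C c : A n) ∈ Q := hQ.sos (isSOS_const hc)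

theorem smul {c : ℝ} (hc : 0 ≤ c) {a : A n} (ha : a ∈ Q) : C c * a ∈ Q :=
  hQ.sos_mul (isSOS_const hc) ha

/-- If a negative constant lies in `Q` then `-1 ∈ Q`. -/
theorem neg_one_mem {c : ℝ} (hc : c < 0) (h : (C c : A n) ∈ Q) : (-1 : A n) ∈ Q := by
  have h2 : (C (-c)⁻¹ : A n) * C c ∈ Q := hQ.smul (by rw [inv_nonneg]; linarith) h
  have e : (C (-c)⁻¹ : A n) * C c = -1 := by
    rw [← C_mul]
    have : (-c)⁻¹ * c = -1 := by
      have hc' : c ≠ 0 := ne_of_lt hc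
      field_simp
    rw [this]
    simp
  rwa [e] at h2

/-- If `-1 ∈ Q` then everything is in `Q`. -/
theorem mem_of_neg_one (h : (-1 : A n) ∈ Q) (p : A n) : p ∈ Q := by
  have h1 : (C (1/2) * (p + 1)) ^ 2 ∈ Q := hQ.sq _
  have h2 : (C (1/2) * (p - 1)) ^ 2 * (-1) ∈ Q := hQ.sq_mul _ h
  have hsum := hQ.add h1 h2
  have e2 : (C (1/2) : A n) * 2 = 1 := by
    rw [show (2 : A n) = C 2 from (map_ofNat C 2).symm, ← C_mul]
    norm_num
  have e : (C (1/2) * (p + 1)) ^ 2 + (C (1/2) * (p - 1)) ^ 2 * (-1) = p := by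
    linear_combination (p * (2 * C (1/2) + 1)) * e2
  rwa [e] at hsum

/-- key identity: from bounds `u - p ∈ Q`, `u + p ∈ Q`, `u > 0`, get `u² - p² ∈ Q`. -/
theorem sq_bound {u : ℝ} (hu : 0 < u) {p : A n} (h1 : C u - p ∈ Q) (h2 : C u + p ∈ Q) :
    C (u ^ 2) - p ^ 2 ∈ Q := by
  have hmem : C (1 / (2*u)) * ((C u + p) ^ 2 * (C u - p) + (C u - p) ^ 2 * (C u + p)) ∈ Q :=
    hQ.smul (by positivity) (hQ.add (hQ.sq_mul _ h1) (hQ.sq_mul _ h2))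
  have h' : (C (1 / (2*u)) : A n) * (2 * C u) = 1 := by
    rw [show (2 : A n) = C 2 from (map_ofNat C 2).symm, ← C_mul, ← C_mul]
    have h2u : (2 * u) ≠ 0 := by positivity
    rw [show 1 / (2*u) * (2 * u) = 1 by field_simp]
    simp
  have e : (C (1 / (2*u)) : A n) * ((C u + p) ^ 2 * (C u - p) + (C u - p) ^ 2 * (C u + p))
      = C (u ^ 2) - p ^ 2 := by
    rw [show (C (u^2) : A n) = (C u)^2 from map_pow C u 2]
    linear_combination ((C u : A n) ^ 2 - p ^ 2) * h'
  rwa [e] at hmem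

end QMod

theorem Cident1 (a b u : ℝ) (p q : A n) :
    C u - (p + q) + (p - C a + (q - C b)) = (C (u - a - b) : A n) := by
  rw [C_sub, C_sub]; ring


---- NEW PART ----
variable {m : ℕ} {g : Fin m → A n}

/-- The quadratic module generated by the `g j`. -/
def M (g : Fin m → A n) : Set (A n) := {p | InQM g p}

theorem qmod_M : QMod (M g) := by
  refine ⟨⟨1, 0, isSOS_one, fun j => isSOS_zero, by simp⟩, ?_, ?_⟩
  · rintro a b ⟨s0, s, hs0, hs, rfl⟩ ⟨t0, t, ht0, ht, rfl⟩
    refine ⟨s0 + t0, fun j => s j + t j, isSOS_add hs0 ht0,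
      fun j => isSOS_add (hs j) (ht j), ?_⟩
    simp only [add_mul]
    rw [Finset.sum_add_distrib]
    ring
  · rintro a p ⟨s0, s, hs0, hs, rfl⟩
    refine ⟨p^2 * s0, fun j => p^2 * s j, isSOS_mul (isSOS_sq p) hs0,
      fun j => isSOS_mul (isSOS_sq p) (hs j), ?_⟩
    simp only [mul_add, Finset.mul_sum, mul_assoc]

theorem g_mem_M (j : Fin m) : g j ∈ M g := by
  refine ⟨0, fun j' => if j' = j then 1 else 0, isSOS_zero, ?_, ?_⟩
  · intro j'
    by_cases h : j' = j <;> simp [h, isSOS_one, isSOS_zero]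
  · simp [ite_mul]

/-- Bounded elements. -/
def Bdd (g : Fin m → A n) : Set (A n) :=
  {p | ∃ k : ℝ, C k - p ∈ M g ∧ C k + p ∈ M g}

theorem bdd_neg {p : A n} (hp : p ∈ Bdd g) : -p ∈ Bdd g := by
  obtain ⟨k, h1, h2⟩ := hp
  exact ⟨k, by simpa [sub_neg_eq_add] using h2, by simpa [← sub_eq_add_neg] using h1⟩

theorem bdd_add {p q : A n} (hp : p ∈ Bdd g) (hq : q ∈ Bdd g) : p + q ∈ Bdd g := by
  obtain ⟨k, h1, h2⟩ := hp
  obtain ⟨l, h3, h4⟩ := hq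
  have hM := qmod_M (g := g)
  refine ⟨k + l, ?_, ?_⟩
  · have := hM.add h1 h3
    rwa [show (C (k+l) : A n) - (p + q) = (C k - p) + (C l - q) by rw [C_add]; ring] at *
  · have := hM.add h2 h4
    rwa [show (C (k+l) : A n) + (p + q) = (C k + p) + (C l + q) by rw [C_add]; ring] at *

theorem bdd_const (c : ℝ) : (C c : A n) ∈ Bdd g := by
  have hM := qmod_M (g := g)
  refine ⟨|c|, ?_, ?_⟩
  · rw [← C_sub]; exact hM.const (by simp [abs_nonneg, sub_nonneg, le_abs_self])
  · rw [← C_add]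
    exact hM.const (by linarith [neg_abs_le c])

theorem bdd_mono {p : A n} {k k' : ℝ} (hk : k ≤ k') (h : C k - p ∈ M g) : C k' - p ∈ M g := by
  have hM := qmod_M (g := g)
  have := hM.add (hM.const (c := k' - k) (by linarith)) h
  rwa [show (C (k'-k) : A n) + (C k - p) = C k' - p by rw [C_sub]; ring] at this

theorem bdd_mono' {p : A n} {k k' : ℝ} (hk : k ≤ k') (h : C k + p ∈ M g) : C k' + p ∈ M g := by
  have hM := qmod_M (g := g)
  have := hM.add (hM.const (c := k' - k) (by linarith)) h
  rwa [show (C (k'-k) : A n) + (C k + p) = C k' + p by rw [C_sub]; ring] at this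

theorem bdd_sq {p : A n} (hp : p ∈ Bdd g) : p ^ 2 ∈ Bdd g := by
  have hM := qmod_M (g := g)
  obtain ⟨k, h1, h2⟩ := hp
  set u : ℝ := |k| + 1 with hu
  have hu0 : 0 < u := by positivity
  have hk : k ≤ u := by rw [hu]; linarith [le_abs_self k]
  refine ⟨u ^ 2, hM.sq_bound hu0 (bdd_mono hk h1) (bdd_mono' hk h2), ?_⟩
  have := hM.add (hM.const (c := u^2) (by positivity)) (hM.sq p)
  exact this

theorem bdd_smul (c : ℝ) {p : A n} (hp : p ∈ Bdd g) : C c * p ∈ Bdd g := by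
  have hM := qmod_M (g := g)
  rcases le_or_gt 0 c with hc | hc
  · obtain ⟨k, h1, h2⟩ := hp
    refine ⟨c * k, ?_, ?_⟩
    · have := hM.smul hc h1
      rwa [show (C c : A n) * (C k - p) = C (c*k) - C c * p by rw [C_mul]; ring] at this
    · have := hM.smul hc h2
      rwa [show (C c : A n) * (C k + p) = C (c*k) + C c * p by rw [C_mul]; ring] at this
  · obtain ⟨k, h1, h2⟩ := bdd_neg hp
    have hc' : (0:ℝ) ≤ -c := by linarith
    refine ⟨(-c) * k, ?_, ?_⟩
    · have := hM.smul hc' h1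
      rwa [show (C (-c) : A n) * (C k - -p) = C ((-c)*k) - C c * p by
        rw [C_mul, C_neg]; ring] at this
    · have := hM.smul hc' h2
      rwa [show (C (-c) : A n) * (C k + -p) = C ((-c)*k) + C c * p by
        rw [C_mul, C_neg]; ring] at this

theorem bdd_congr {p q : A n} (h : p = q) (hp : p ∈ Bdd g) : q ∈ Bdd g := h ▸ hp

theorem bdd_mul {p q : A n} (hp : p ∈ Bdd g) (hq : q ∈ Bdd g) : p * q ∈ Bdd g := by
  have e2 : (C (1/2) : A n) * 2 = 1 := by
    rw [show (2 : A n) = C 2 from (map_ofNat C 2).symm, ← C_mul]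
    norm_num
  have key : (C (1/2) * (p + q)) ^ 2 + -((C (1/2) * (p - q)) ^ 2) = p * q := by
    linear_combination (p * q * (2 * C (1/2) + 1)) * e2
  have m1 : (C (1/2) * (p + q)) ^ 2 ∈ Bdd g := bdd_sq (bdd_smul (1/2) (bdd_add hp hq))
  have m2 : -((C (1/2) * (p - q)) ^ 2) ∈ Bdd g := by
    refine bdd_neg (bdd_sq (bdd_smul (1/2) ?_))
    have := bdd_add hp (bdd_neg hq)
    rwa [← sub_eq_add_neg] at this
  exact bdd_congr key (bdd_add m1 m2)

theorem bdd_X (harch : ∃ N : ℕ, InQM g ((N : MvPolynomial (Fin n) ℝ) - ∑ i, (X i) ^ 2))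
    (i : Fin n) : (X i : A n) ∈ Bdd g := by
  have hM := qmod_M (g := g)
  obtain ⟨N, hN⟩ := harch
  have hN' : (C (N:ℝ) : A n) - ∑ j, X j ^ 2 ∈ M g := by
    rwa [map_natCast C N]
  have hsum : (∑ j ∈ Finset.univ.erase i, (X j:A n) ^ 2) ∈ M g := by
    refine Finset.sum_induction _ _ (fun a b ha hb => hM.add ha hb) hM.zero ?_
    intro j _
    exact hM.sq (X j)
  have esum : (∑ j, (X j : A n) ^2) - ∑ j ∈ Finset.univ.erase i, (X j:A n)^2 = X i ^ 2 := by
    rw [← Finset.add_sum_erase _ _ (Finset.mem_univ i)]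
    ring
  have e2 : (C (1/2) : A n) * 2 = 1 := by
    rw [show (2 : A n) = C 2 from (map_ofNat C 2).symm, ← C_mul]
    norm_num
  have ek : (C (((N:ℝ)+1)/2) : A n) = C (1/2) * (C (N:ℝ) + 1) := by
    rw [show (1 : A n) = C 1 from C_1.symm, ← C_add, ← C_mul]
    congr 1
    ring
  refine ⟨((N:ℝ)+1)/2, ?_, ?_⟩
  · have hmem : (C (1/2) : A n) * (((C (N:ℝ) - ∑ j, X j ^ 2) + ∑ j ∈ Finset.univ.erase i,
        (X j:A n) ^ 2) + (1 - X i)^2) ∈ M g :=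
      hM.smul (by norm_num) (hM.add (hM.add hN' hsum) (hM.sq _))
    have e : (C (1/2) : A n) * (((C (N:ℝ) - ∑ j, X j ^ 2) + ∑ j ∈ Finset.univ.erase i,
        (X j:A n) ^ 2) + (1 - X i)^2) = C (((N:ℝ)+1)/2) - X i := by
      rw [ek]
      linear_combination (- (C (1/2) : A n)) * esum - X i * e2
    rwa [e] at hmem
  · have hmem : (C (1/2) : A n) * (((C (N:ℝ) - ∑ j, X j ^ 2) + ∑ j ∈ Finset.univ.erase i,
        (X j:A n) ^ 2) + (1 + X i)^2) ∈ M g :=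
      hM.smul (by norm_num) (hM.add (hM.add hN' hsum) (hM.sq _))
    have e : (C (1/2) : A n) * (((C (N:ℝ) - ∑ j, X j ^ 2) + ∑ j ∈ Finset.univ.erase i,
        (X j:A n) ^ 2) + (1 + X i)^2) = C (((N:ℝ)+1)/2) + X i := by
      rw [ek]
      linear_combination (- (C (1/2) : A n)) * esum + X i * e2
    rwa [e] at hmem

/-- Archimedean property: every polynomial is bounded. -/
theorem arch (harch : ∃ N : ℕ, InQM g ((N : MvPolynomial (Fin n) ℝ) - ∑ i, (X i) ^ 2))
    (p : A n) : ∃ k : ℝ, (C k - p ∈ M g) ∧ (C k + p ∈ M g) := by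
  have : p ∈ Bdd g := by
    induction p using MvPolynomial.induction_on with
    | C a => exact bdd_const a
    | add p q hp hq => exact bdd_add hp hq
    | mul_X p i hp => exact bdd_mul hp (bdd_X harch i)
  exact this


---- NEW: the state functional ----
section Phi
set_option linter.unusedSectionVars false

variable {Q : Set (A n)} (hQ : QMod Q) (hne : (-1 : A n) ∉ Q)
  (htot : ∀ p : A n, p ∈ Q ∨ -p ∈ Q)
  (harchQ : ∀ p : A n, ∃ k : ℝ, C k - p ∈ Q ∧ C k + p ∈ Q)

/-- upper bounds of `p` relative to `Q`. -/
def U (Q : Set (A n)) (p : A n) : Set ℝ := {r : ℝ | C r - p ∈ Q}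

/-- the state associated to `Q`. -/
def phi (Q : Set (A n)) (p : A n) : ℝ := sInf (U Q p)

include hQ hne

theorem const_nonneg {c : ℝ} (h : (C c : A n) ∈ Q) : 0 ≤ c := by
  by_contra hc
  exact hne (hQ.neg_one_mem (by linarith) h)

include harchQ

theorem U_nonempty (p : A n) : (U Q p).Nonempty := ⟨(harchQ p).choose, (harchQ p).choose_spec.1⟩

theorem U_bddBelow (p : A n) : BddBelow (U Q p) := by
  obtain ⟨k, -, hk⟩ := harchQ p
  refine ⟨-k, fun r hr => ?_⟩
  have := hQ.add hr hk
  rw [show C r - p + (C k + p) = C (r + k) by rw [C_add]; ring] at this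
  linarith [const_nonneg hQ hne this]

theorem phi_le {p : A n} {r : ℝ} (h : C r - p ∈ Q) : phi Q p ≤ r :=
  csInf_le (U_bddBelow hQ hne harchQ p) h

theorem le_phi {p : A n} {x : ℝ} (h : ∀ r ∈ U Q p, x ≤ r) : x ≤ phi Q p :=
  le_csInf (U_nonempty hQ hne harchQ p) h

theorem U_upward {p : A n} {r r' : ℝ} (h : r ∈ U Q p) (hrr : r ≤ r') : r' ∈ U Q p := by
  have := hQ.add (hQ.const (c := r' - r) (by linarith)) h
  rw [show (C (r'-r) : A n) + (C r - p) = C r' - p by rw [C_sub]; ring] at this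
  exact this

theorem mem_of_phi_lt {p : A n} {r : ℝ} (h : phi Q p < r) : C r - p ∈ Q := by
  obtain ⟨r', hr', hlt⟩ := exists_lt_of_csInf_lt (U_nonempty hQ hne harchQ p) h
  exact U_upward hQ hne harchQ hr' hlt.le

theorem phi_nonneg {p : A n} (hp : p ∈ Q) : 0 ≤ phi Q p := by
  refine le_phi hQ hne harchQ fun r hr => ?_
  have := hQ.add hr hp
  rw [show C r - p + p = C r by ring] at this
  exact const_nonneg hQ hne this

theorem phi_C (c : ℝ) : phi Q (C c) = c := by
  have h1 : phi Q (C c) ≤ c := phi_le hQ hne harchQ (by rw [sub_self]; exact hQ.zero)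
  have h2 : c ≤ phi Q (C c) := by
    refine le_phi hQ hne harchQ fun r hr => ?_
    have hr' : (C (r - c) : A n) ∈ Q := by rw [C_sub]; exact hr
    linarith [const_nonneg hQ hne hr']
  linarith


include htot

theorem mem_of_lt_phi {p : A n} {r : ℝ} (h : r < phi Q p) : p - C r ∈ Q := by
  rcases htot (C r - p) with hmem | hmem
  · exact absurd (phi_le hQ hne harchQ hmem) (not_le.mpr h)
  · rwa [neg_sub] at hmem

theorem phi_neg (p : A n) : phi Q (-p) = - phi Q p := by
  have h1 : - phi Q p ≤ phi Q (-p) := by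
    refine le_phi hQ hne harchQ fun r hr => ?_
    have h2 : -r ≤ phi Q p := by
      refine le_phi hQ hne harchQ fun r' hr' => ?_
      have := hQ.add hr hr'
      rw [show C r - -p + (C r' - p) = C (r + r') by rw [C_add]; ring] at this
      have := const_nonneg hQ hne this
      linarith
    linarith
  have h2 : phi Q (-p) ≤ - phi Q p := by
    refine le_of_forall_pos_le_add fun ε hε => ?_
    have hlt : phi Q p - ε < phi Q p := by linarith
    have := mem_of_lt_phi hQ hne htot harchQ hlt
    have hmem : C (-(phi Q p - ε)) - (-p) ∈ Q := by
      rwa [show (C (-(phi Q p - ε)) : A n) - (-p) = p - C (phi Q p - ε) by rw [C_neg]; ring]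
    have := phi_le hQ hne harchQ hmem
    linarith
  linarith

theorem phi_add (p q : A n) : phi Q (p + q) = phi Q p + phi Q q := by
  have h1 : phi Q (p + q) ≤ phi Q p + phi Q q := by
    refine le_of_forall_pos_le_add fun ε hε => ?_
    obtain ⟨r, hr, hrlt⟩ := exists_lt_of_csInf_lt (U_nonempty hQ hne harchQ p)
      (show phi Q p < phi Q p + ε/2 by linarith)
    obtain ⟨r', hr', hrlt'⟩ := exists_lt_of_csInf_lt (U_nonempty hQ hne harchQ q)
      (show phi Q q < phi Q q + ε/2 by linarith)
    have hmem := hQ.add hr hr'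
    rw [show C r - p + (C r' - q) = C (r + r') - (p + q) by rw [C_add]; ring] at hmem
    have := phi_le hQ hne harchQ hmem
    linarith
  have h2 : phi Q p + phi Q q ≤ phi Q (p + q) := by
    refine le_phi hQ hne harchQ fun u hu => ?_
    by_contra hlt
    push_neg at hlt
    set ε := (phi Q p + phi Q q - u) / 3 with hε
    have hε0 : 0 < ε := by rw [hε]; linarith
    have hp' := mem_of_lt_phi hQ hne htot harchQ (show phi Q p - ε < phi Q p by linarith)
    have hq' := mem_of_lt_phi hQ hne htot harchQ (show phi Q q - ε < phi Q q by linarith)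
    have hmem := hQ.add hu (hQ.add hp' hq')
    rw [Cident1] at hmem
    have := const_nonneg hQ hne hmem
    linarith
  linarith

theorem phi_smul (c : ℝ) (p : A n) : phi Q (C c * p) = c * phi Q p := by
  have key : ∀ d : ℝ, 0 ≤ d → ∀ q : A n, phi Q (C d * q) ≤ d * phi Q q := by
    intro d hd q
    refine le_of_forall_pos_le_add fun ε hε => ?_
    have hd1 : (0:ℝ) < d + 1 := by linarith
    have hεd : 0 < ε / (d+1) := by positivity
    obtain ⟨r, hr, hrlt⟩ := exists_lt_of_csInf_lt (U_nonempty hQ hne harchQ q)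
      (show phi Q q < phi Q q + ε / (d+1) by linarith)
    have hmem := hQ.smul hd hr
    rw [show (C d : A n) * (C r - q) = C (d * r) - C d * q by rw [C_mul]; ring] at hmem
    have h4 : phi Q (C d * q) ≤ d * r := phi_le hQ hne harchQ hmem
    have h5 : d * r ≤ d * (phi Q q + ε/(d+1)) := mul_le_mul_of_nonneg_left hrlt.le hd
    have h6 : d * (ε / (d+1)) ≤ ε := by
      rw [mul_div_assoc', div_le_iff₀ hd1]
      nlinarith
    nlinarith
  have keyeq : ∀ d : ℝ, 0 ≤ d → ∀ q : A n, phi Q (C d * q) = d * phi Q q := by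
    intro d hd q
    have h1 := key d hd q
    have h2 := key d hd (-q)
    rw [phi_neg hQ hne htot harchQ, show (C d : A n) * (-q) = -(C d * q) by ring,
      phi_neg hQ hne htot harchQ] at h2
    linarith
  rcases le_or_gt 0 c with hc | hc
  · exact keyeq c hc p
  · have e3 : (C c : A n) * p = -(C (-c) * p) := by rw [C_neg]; ring
    rw [e3, phi_neg hQ hne htot harchQ, keyeq (-c) (by linarith) p]
    ring

theorem phi_sq (p : A n) : phi Q (p ^ 2) = (phi Q p) ^ 2 := by
  set r := phi Q p with hr
  have hge : (phi Q p) ^ 2 ≤ phi Q (p ^ 2) := by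
    have hmem : (p - C r) ^ 2 ∈ Q := hQ.sq _
    have e : (p - C r) ^ 2 = p ^ 2 + (-(C (2*r) * p) + C (r^2)) := by
      rw [show (C (2*r) : A n) = C 2 * C r by rw [C_mul], show (C (r^2) : A n) = C r ^ 2 from
        map_pow C r 2, show (C 2 : A n) = 2 from map_ofNat C 2]
      ring
    have h0 := phi_nonneg hQ hne harchQ hmem
    rw [e, phi_add hQ hne htot harchQ, phi_add hQ hne htot harchQ,
      phi_neg hQ hne htot harchQ, phi_smul hQ hne htot harchQ, phi_C hQ hne harchQ] at h0
    nlinarith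
  have hle : phi Q (p ^ 2) ≤ (phi Q p) ^ 2 := by
    have key : ∀ ε > 0, phi Q (p ^ 2) ≤ (|r| + ε) ^ 2 := by
      intro ε hε
      have hu0 : (0:ℝ) < |r| + ε := by positivity
      have h1 : C (|r| + ε) - p ∈ Q := mem_of_phi_lt hQ hne harchQ
        (by have := le_abs_self r; linarith)
      have h2 : C (|r| + ε) + p ∈ Q := by
        have h2' : C (|r| + ε) - (-p) ∈ Q := mem_of_phi_lt hQ hne harchQ
          (by rw [phi_neg hQ hne htot harchQ]; have := neg_abs_le r; linarith)
        rwa [sub_neg_eq_add] at h2'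
      have := phi_le hQ hne harchQ (hQ.sq_bound hu0 h1 h2)
      exact this
    by_contra hlt
    push_neg at hlt
    set δ := phi Q (p^2) - r^2 with hδ
    have hδ0 : 0 < δ := by rw [hδ]; nlinarith
    set ε := min 1 (δ / (8 * |r| + 8)) with hε
    have hε0 : 0 < ε := by
      rw [hε]
      have : (0:ℝ) < δ / (8 * |r| + 8) := by positivity
      exact lt_min one_pos this
    have h1 : ε ≤ 1 := min_le_left _ _
    have h2 : ε ≤ δ / (8 * |r| + 8) := min_le_right _ _
    have h3 : ε * (8 * |r| + 8) ≤ δ := (le_div_iff₀ (show (0:ℝ) < 8 * |r| + 8 by positivity)).mp h2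
    have h4 := key ε hε0
    nlinarith [abs_nonneg r, sq_abs r, sq_nonneg ε, hδ0, hε0, h1, h3, h4]
  linarith

theorem phi_mul (p q : A n) : phi Q (p * q) = phi Q p * phi Q q := by
  have e : p * q + p * q = (p + q)^2 + (-(p^2) + -(q^2)) := by ring
  have h := congrArg (phi Q) e
  rw [phi_add hQ hne htot harchQ, phi_add hQ hne htot harchQ, phi_add hQ hne htot harchQ,
    phi_sq hQ hne htot harchQ, phi_neg hQ hne htot harchQ, phi_neg hQ hne htot harchQ,
    phi_sq hQ hne htot harchQ, phi_sq hQ hne htot harchQ,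
    phi_add hQ hne htot harchQ] at h
  nlinarith [h]

theorem phi_eval (p : A n) : eval (fun i => phi Q (X i)) p = phi Q p := by
  induction p using MvPolynomial.induction_on with
  | C a => rw [eval_C, phi_C hQ hne harchQ]
  | add p q hp hq => rw [map_add, hp, hq, phi_add hQ hne htot harchQ]
  | mul_X p i hp => rw [map_mul, hp, eval_X, phi_mul hQ hne htot harchQ]

end Phi

---- NEW PART ----

/-- The positivity-gain lemma (key step, following Jacobi). -/
theorem gain {s w : A n} (hw : w ∈ M g) (hs : IsSOS s) (hq : w * s - 1 ∈ M g)
    {k : ℝ} (hk1 : 1 ≤ k) (hks : C k - s ∈ M g) (hkw : C k - w ∈ M g) :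
    w - C (1/(k+k^3)) ∈ M g := by
  have hM : QMod (M g) := qmod_M
  set t : ℝ := 1/(k+k^3) with ht
  have hkk : (0:ℝ) < k + k^3 := by positivity
  have ht0 : 0 < t := by positivity
  -- the five members
  have A1 : (1 - C t * s)^2 * w ∈ M g := hM.sq_mul _ hw
  have A2 : C t * (w * s - 1) + C t * (w * s - 1) ∈ M g :=
    hM.add (hM.smul ht0.le hq) (hM.smul ht0.le hq)
  have A3 : (C t)^2 * (C k - s) ∈ M g := hM.sq_mul _ hks
  have A4 : (C t * C k)^2 * (C k - s) ∈ M g := hM.sq_mul _ hks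
  have inner : (C k) * (C k - s) + s * (C k - w) + 1 ∈ M g := by
    refine hM.add (hM.add ?_ (hM.sos_mul hs hkw)) hM.one
    have := hM.smul (show (0:ℝ) ≤ k by linarith) hks
    exact this
  have A5 : (C t)^2 * (s * ((C k) * (C k - s) + s * (C k - w) + 1)) ∈ M g :=
    hM.sq_mul _ (hM.sos_mul hs inner)
  have total := hM.add (hM.add (hM.add (hM.add A1 A2) A3) A4) A5
  have hTK : (C t : A n) * (C k + (C k)^3) = 1 := by
    rw [show ((C k : A n))^3 = C (k^3) from (map_pow C k 3).symm, ← C_add, ← C_mul]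
    rw [show t * (k + k^3) = 1 by rw [ht]; field_simp]
    exact C_1
  have e : (1 - C t * s)^2 * w + (C t * (w * s - 1) + C t * (w * s - 1)) + (C t)^2 * (C k - s)
      + (C t * C k)^2 * (C k - s) + (C t)^2 * (s * ((C k) * (C k - s) + s * (C k - w) + 1))
      = w - C t := by
    linear_combination (C t : A n) * hTK
  rwa [e] at total

/-- main theorem -/
theorem main (harch : ∃ N : ℕ, InQM g ((N : MvPolynomial (Fin n) ℝ) - ∑ i, (X i) ^ 2))
    (f : A n)
    (hf : ∀ x : Fin n → ℝ, (∀ j, 0 ≤ eval x (g j)) → 0 < eval x f) :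
    InQM g f := by
  have hM : QMod (M g) := qmod_M
  by_contra hnf
  -- -1 ∉ M g
  have hne1 : (-1 : A n) ∉ M g := fun h => hnf (hM.mem_of_neg_one h f)
  -- the sup
  set Λ : Set ℝ := {lam : ℝ | f - C lam ∈ M g} with hΛ
  obtain ⟨kf, hkf1, hkf2⟩ := arch harch f
  have hΛne : Λ.Nonempty := by
    refine ⟨-kf, ?_⟩
    have : f - C (-kf) = C kf + f := by rw [C_neg]; ring
    rw [hΛ, Set.mem_setOf_eq, this]
    exact hkf2
  have hΛbdd : BddAbove Λ := by
    refine ⟨kf, fun lam hlam => ?_⟩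
    by_contra hlt
    push_neg at hlt
    have := hM.add hkf1 hlam
    rw [show C kf - f + (f - C lam) = C (kf - lam) by rw [C_sub]; ring] at this
    exact hne1 (hM.neg_one_mem (by linarith) this)
  set lam0 : ℝ := sSup Λ with hlam0
  -- sup is ≤ 0
  have hlam0le : lam0 ≤ 0 := by
    by_contra hpos
    push_neg at hpos
    obtain ⟨lam, hlam, hlam'⟩ := exists_lt_of_lt_csSup hΛne (show 0 < lam0 from hpos)
    refine hnf ?_
    have := hM.add hlam (hM.const (c := lam) (by linarith))
    rwa [show f - C lam + C lam = f by ring] at this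
  -- Λ is closed downwards-ish and upward by gain; properness of M - f·Σ:
  -- the extended module
  set M' : Set (A n) := {x | ∃ q s, q ∈ M g ∧ IsSOS s ∧ x = q + (-f) * s} with hM'
  have hMM' : M g ⊆ M' := fun q hq => ⟨q, 0, hq, isSOS_zero, by ring⟩
  have hM'qm : QMod M' := by
    refine ⟨hMM' hM.one, ?_, ?_⟩
    · rintro a b ⟨q1, s1, hq1, hs1, rfl⟩ ⟨q2, s2, hq2, hs2, rfl⟩
      exact ⟨q1 + q2, s1 + s2, hM.add hq1 hq2, isSOS_add hs1 hs2, by ring⟩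
    · rintro a p ⟨q1, s1, hq1, hs1, rfl⟩
      exact ⟨p^2 * q1, p^2 * s1, hM.sq_mul p hq1, isSOS_mul (isSOS_sq p) hs1, by ring⟩
  have hnegf : -f ∈ M' := ⟨0, 1, hM.zero, isSOS_one, by ring⟩
  -- properness
  have hproper : (-1 : A n) ∉ M' := by
    rintro ⟨q, s, hq, hs, hqs⟩
    -- get the uniform bound k
    obtain ⟨ks, hks, -⟩ := arch harch s
    obtain ⟨kf', hkf', -⟩ := arch harch (f - C lam0)
    set k : ℝ := |ks| + |kf'| + 2 with hk
    have hk1 : 1 ≤ k := by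
      have := abs_nonneg ks; have := abs_nonneg kf'; rw [hk]; linarith
    have hksk : C k - s ∈ M g := by
      have := hM.add (hM.const (c := k - ks) (by rw [hk]; cases abs_cases ks <;> cases abs_cases kf' <;> linarith)) hks
      rwa [show (C (k - ks) : A n) + (C ks - s) = C k - s by rw [C_sub]; ring] at this
    -- for each lam in Λ close to lam0, gain a fixed amount
    set t : ℝ := 1/(k+k^3) with ht
    have hkk : (0:ℝ) < k + k^3 := by positivity
    have ht0 : 0 < t := by positivity
    have ht1 : t ≤ 1 := by
      rw [ht, div_le_one hkk]
      nlinarith [hk1, pow_nonneg (show (0:ℝ) ≤ k by linarith) 3]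
    obtain ⟨lam, hlam, hlamgt⟩ := exists_lt_of_lt_csSup hΛne
      (show lam0 - t < lam0 by linarith)
    have hlamle : lam ≤ lam0 := le_csSup hΛbdd hlam
    -- w := f - C lam ∈ M g
    have hw : f - C lam ∈ M g := hlam
    have hwk : C k - (f - C lam) ∈ M g := by
      have := hM.add (hM.const (c := k - kf' + (lam - lam0))
        (by rw [hk]; cases abs_cases ks <;> cases abs_cases kf' <;> linarith)) hkf'
      rwa [show (C (k - kf' + (lam - lam0)) : A n) + (C kf' - (f - C lam0)) = C k - (f - C lam)
        by simp only [map_add, map_sub]; ring] at this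
    have hwq : (f - C lam) * s - 1 ∈ M g := by
      have hq2 : q + C (-lam) * s ∈ M g := hM.add hq (hM.sos (isSOS_smul (by linarith) hs))
      have e : q + C (-lam) * s = (f - C lam) * s - 1 := by
        rw [C_neg]
        linear_combination -hqs
      rwa [e] at hq2
    have := gain hw hs hwq hk1 hksk hwk
    have hmem : f - C (lam + t) ∈ M g := by
      rwa [show (f - C lam) - C (1/(k+k^3)) = f - C (lam + t) by rw [ht, C_add]; ring] at this
    have : lam + t ≤ lam0 := le_csSup hΛbdd hmem
    linarith
  -- Zorn
  set S : Set (Set (A n)) := {Q | QMod Q ∧ M' ⊆ Q ∧ (-1 : A n) ∉ Q} with hS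
  have hM'S : M' ∈ S := ⟨hM'qm, subset_rfl, hproper⟩
  obtain ⟨Q, hQsub, hQmax⟩ := zorn_subset_nonempty S (fun c hcS hchain hcne => by
    refine ⟨⋃₀ c, ⟨⟨?_, ?_, ?_⟩, ?_, ?_⟩, fun s hs => Set.subset_sUnion_of_mem hs⟩
    · obtain ⟨Q0, hQ0⟩ := hcne
      exact Set.mem_sUnion_of_mem ((hcS hQ0).1.one) hQ0
    · rintro a b ⟨Qa, hQa, ha⟩ ⟨Qb, hQb, hb⟩
      rcases hchain.total hQa hQb with h | h
      · exact Set.mem_sUnion_of_mem ((hcS hQb).1.add (h ha) hb) hQb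
      · exact Set.mem_sUnion_of_mem ((hcS hQa).1.add ha (h hb)) hQa
    · rintro a p ⟨Qa, hQa, ha⟩
      exact Set.mem_sUnion_of_mem ((hcS hQa).1.sq_mul p ha) hQa
    · obtain ⟨Q0, hQ0⟩ := hcne
      exact fun x hx => Set.mem_sUnion_of_mem ((hcS hQ0).2.1 hx) hQ0
    · rintro ⟨Qa, hQa, ha⟩
      exact (hcS hQa).2.2 ha) M' hM'S
  obtain ⟨⟨hQqm, hQM', hQne⟩, hQmax'⟩ := hQmax
  -- totality
  have htot : ∀ p : A n, p ∈ Q ∨ -p ∈ Q := by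
    intro a
    by_contra hcon
    push_neg at hcon
    obtain ⟨ha1, ha2⟩ := hcon
    have key : ∀ b : A n, b ∉ Q → ∃ u s1, u ∈ Q ∧ IsSOS s1 ∧ (-1 : A n) = u + b * s1 := by
      intro b hb
      set Qb : Set (A n) := {x | ∃ u s1, u ∈ Q ∧ IsSOS s1 ∧ x = u + b * s1} with hQb
      have hQQb : Q ⊆ Qb := fun u hu => ⟨u, 0, hu, isSOS_zero, by ring⟩
      have hQbqm : QMod Qb := by
        refine ⟨hQQb hQqm.one, ?_, ?_⟩
        · rintro x y ⟨u1, s1, hu1, hs1, rfl⟩ ⟨u2, s2, hu2, hs2, rfl⟩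
          exact ⟨u1 + u2, s1 + s2, hQqm.add hu1 hu2, isSOS_add hs1 hs2, by ring⟩
        · rintro x p ⟨u1, s1, hu1, hs1, rfl⟩
          exact ⟨p^2*u1, p^2*s1, hQqm.sq_mul p hu1, isSOS_mul (isSOS_sq p) hs1, by ring⟩
      have hbQb : b ∈ Qb := ⟨0, 1, hQqm.zero, isSOS_one, by ring⟩
      by_contra hno
      push_neg at hno
      have hQbS : Qb ∈ S := by
        refine ⟨hQbqm, fun x hx => hQQb (hQM' hx), ?_⟩
        rintro ⟨u, s1, hu, hs1, h⟩
        exact hno u s1 hu hs1 h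
      have hle := hQmax' hQbS hQQb
      exact hb (hle hbQb)
    obtain ⟨u1, s1, hu1, hs1, E1⟩ := key a ha1
    obtain ⟨u2, s2, hu2, hs2, E2⟩ := key (-a) ha2
    -- -s1 ∈ Q
    have hns1 : -s1 = s2 + (s2 * u1 + s1 * u2) := by linear_combination s2 * E1 + s1 * E2
    have hns1Q : -s1 ∈ Q := by
      rw [hns1]
      exact hQqm.add (hQqm.sos hs2) (hQqm.add (hQqm.sos_mul hs2 hu1) (hQqm.sos_mul hs1 hu2))
    -- ideal trick: a * s1 ∈ Q
    have e2 : (C (1/2) : A n) * 2 = 1 := by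
      rw [show (2 : A n) = C 2 from (map_ofNat C 2).symm, ← C_mul]
      norm_num
    have haS1 : a * s1 ∈ Q := by
      have h1 : ((a+1) * C (1/2))^2 * s1 ∈ Q := hQqm.sq_mul _ (hQqm.sos hs1)
      have h2 : ((a-1) * C (1/2))^2 * (-s1) ∈ Q := hQqm.sq_mul _ hns1Q
      have := hQqm.add h1 h2
      rwa [show ((a+1) * C (1/2))^2 * s1 + ((a-1) * C (1/2))^2 * (-s1) = a * s1 by
        linear_combination (a * s1 * (2 * C (1/2) + 1)) * e2] at this
    have : (-1 : A n) ∈ Q := by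
      rw [E1]
      exact hQqm.add hu1 haS1
    exact hQne this
  -- the state
  have harchQ : ∀ p : A n, ∃ k : ℝ, C k - p ∈ Q ∧ C k + p ∈ Q := by
    intro p
    obtain ⟨k, h1, h2⟩ := arch harch p
    exact ⟨k, hQM' (hMM' h1), hQM' (hMM' h2)⟩
  set x : Fin n → ℝ := fun i => phi Q (X i) with hx
  have hgx : ∀ j, 0 ≤ eval x (g j) := by
    intro j
    rw [hx, phi_eval hQqm hQne htot harchQ]
    exact phi_nonneg hQqm hQne harchQ (hQM' (hMM' (g_mem_M j)))
  have hfx : 0 < eval x f := hf x hgx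
  have hfneg : 0 ≤ phi Q (-f) := phi_nonneg hQqm hQne harchQ (hQM' hnegf)
  rw [phi_neg hQqm hQne htot harchQ] at hfneg
  rw [hx, phi_eval hQqm hQne htot harchQ] at hfx
  linarith


end Putinar

theorem stmt_10 {n m : ℕ} (hn : 1 ≤ n) (g : Fin m → MvPolynomial (Fin n) ℝ)
    (harch : ∃ N : ℕ, InQM g ((N : MvPolynomial (Fin n) ℝ) - ∑ i, (X i) ^ 2))
    (f : MvPolynomial (Fin n) ℝ)
    (hf : ∀ x : Fin n → ℝ, (∀ j, 0 ≤ eval x (g j)) → 0 < eval x f) :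
    InQM g f := Putinar.main harch f hf
end
end

section
/- Let f, g_1,…,g_m ∈ ℝ[X] have integer coefficients and degrees at most d, set g_0 := 1 and S := {x ∈ ℝⁿ : g_1(x) ≥ 0,…,g_m(x) ≥ 0}, and assume S is nonempty, compact, contained in [−1,1]ⁿ, has nonempty interior, and Q(S) is archimedean. Assume f(x) > 0 for all x ∈ S. Then there exist an even integer D, a real number b > 0, and sums of squares σ_0, σ_1,…,σ_m ∈ ℝ[X] with deg(σ_j g_j) ≤ D for all j = 0,…,m, such that f = b + Σ_{j=0}^m σ_j g_j. -/
open MvPolynomial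

noncomputable section

/-!
Jacobi–Prestel's proof of Putinar's Positivstellensatz. Let `M` be the quadratic module of the
`g j`, archimedean by hypothesis, let `μ > 0` be the minimum of `f` on `S` and `G = f - μ/2`.
If `-1 ∉ M + Σ²·(-G)`, Zorn extends this module to a maximal proper one `Q`. Such a `Q` is total,
and, being archimedean, closed under `a + δ ∈ Q ∀ δ > 0 ⇒ a ∈ Q`; hence `a ↦ inf {l | l - a ∈ Q}`
is an `ℝ`-algebra character nonnegative on `Q`, i.e. evaluation at a point of `S` where `G ≤ 0`,
which is absurd. So `s G = 1 + q` with `s` a sum of squares and `q ∈ M`, and this identity lets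
one raise `l` in `G - l ∈ M` by a fixed step from `l = -K` up to `l = -μ/4`, giving
`f - μ/4 ∈ M`. The degree bound `D` is then read off the representation.
-/

theorem mem_of_isLowerSet_of_forall_add_mem {L : Set ℝ} (hL : IsLowerSet L) {a b δ : ℝ}
    (hδ : 0 < δ) (ha : a ∈ L) (hstep : ∀ x ∈ L, a ≤ x → x < b → x + δ ∈ L) : b ∈ L := by
  have hmin : ∀ j : ℕ, min (a + j * δ) b ∈ L := by
    intro j
    induction j with
    | zero => exact hL (by simp) ha
    | succ j ih =>
      rcases lt_or_ge (a + j * δ) b with h | h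
      · rw [min_eq_left h.le] at ih
        refine hL ?_ (hstep _ ih (le_add_of_nonneg_right (by positivity)) h)
        exact (min_le_left _ _).trans (by push_cast; linarith)
      · rw [min_eq_right h] at ih
        exact hL (min_le_right _ _) ih
  obtain ⟨j, hj⟩ := exists_nat_ge ((b - a) / δ)
  have hb : b ≤ a + j * δ := by rw [div_le_iff₀ hδ] at hj; linarith
  simpa [min_eq_right hb] using hmin j

section QuadraticModule

variable {A : Type*} [CommRing A]

structure IsQuadraticModule (Q : Set A) : Prop where
  one_mem : (1 : A) ∈ Q
  add_mem {a b : A} : a ∈ Q → b ∈ Q → a + b ∈ Q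
  mul_self_mul_mem (h : A) {a : A} : a ∈ Q → h * h * a ∈ Q

def qmInsert (Q : Set A) (a : A) : Set A :=
  {p | ∃ q ∈ Q, ∃ s, IsSumSq s ∧ p = q + s * a}

theorem subset_qmInsert (Q : Set A) (a : A) : Q ⊆ qmInsert Q a :=
  fun q hq => ⟨q, hq, 0, .zero, by ring⟩

namespace IsQuadraticModule

variable {Q : Set A}

theorem zero_mem (hQ : IsQuadraticModule Q) : (0 : A) ∈ Q := by
  simpa using hQ.mul_self_mul_mem 0 hQ.one_mem

theorem isSumSq_mul_mem (hQ : IsQuadraticModule Q) {s a : A} (hs : IsSumSq s) (ha : a ∈ Q) :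
    s * a ∈ Q := by
  induction hs with
  | zero => simpa using hQ.zero_mem
  | sq_add b _ ih => rw [add_mul]; exact hQ.add_mem (hQ.mul_self_mul_mem b ha) ih

theorem isSumSq_mem (hQ : IsQuadraticModule Q) {s : A} (hs : IsSumSq s) : s ∈ Q := by
  simpa using hQ.isSumSq_mul_mem hs hQ.one_mem

theorem mem_qmInsert_self (hQ : IsQuadraticModule Q) (a : A) : a ∈ qmInsert Q a :=
  ⟨0, hQ.zero_mem, 1, .one, by ring⟩

theorem insert (hQ : IsQuadraticModule Q) (a : A) : IsQuadraticModule (qmInsert Q a) where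
  one_mem := subset_qmInsert Q a hQ.one_mem
  add_mem := by
    rintro _ _ ⟨q₁, hq₁, s₁, hs₁, rfl⟩ ⟨q₂, hq₂, s₂, hs₂, rfl⟩
    exact ⟨q₁ + q₂, hQ.add_mem hq₁ hq₂, s₁ + s₂, hs₁.add hs₂, by ring⟩
  mul_self_mul_mem h := by
    rintro _ ⟨q, hq, s, hs, rfl⟩
    exact ⟨h * h * q, hQ.mul_self_mul_mem h hq, h * h * s, (IsSumSq.mul_self h).mul hs, by ring⟩

end IsQuadraticModule

def IsProperQuadraticModule (Q : Set A) : Prop :=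
  IsQuadraticModule Q ∧ (-1 : A) ∉ Q

def IsMaximalQuadraticModule (Q : Set A) : Prop :=
  Maximal IsProperQuadraticModule Q

theorem exists_isMaximalQuadraticModule {Q₀ : Set A} (h : IsProperQuadraticModule Q₀) :
    ∃ Q, Q₀ ⊆ Q ∧ IsMaximalQuadraticModule Q := by
  refine zorn_subset_nonempty {Q | IsProperQuadraticModule Q}
    (fun c hc hchain ⟨Q₁, hQ₁⟩ => ?_) Q₀ h
  refine ⟨⋃₀ c, ⟨⟨⟨Q₁, hQ₁, (hc hQ₁).1.one_mem⟩, ?_, ?_⟩, ?_⟩, fun _ => Set.subset_sUnion_of_mem⟩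
  · rintro a b ⟨Qa, hQa, ha⟩ ⟨Qb, hQb, hb⟩
    rcases hchain.total hQa hQb with h | h
    · exact ⟨Qb, hQb, (hc hQb).1.add_mem (h ha) hb⟩
    · exact ⟨Qa, hQa, (hc hQa).1.add_mem ha (h hb)⟩
  · rintro x a ⟨Qa, hQa, ha⟩
    exact ⟨Qa, hQa, (hc hQa).1.mul_self_mul_mem x ha⟩
  · rintro ⟨Qa, hQa, ha⟩
    exact (hc hQa).2 ha

namespace IsMaximalQuadraticModule

variable {Q : Set A}

theorem isProper (hQ : IsMaximalQuadraticModule Q) : IsProperQuadraticModule Q := hQ.1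

theorem isQuadraticModule (hQ : IsMaximalQuadraticModule Q) : IsQuadraticModule Q := hQ.1.1

theorem exists_add_mul_eq_neg_one (hQ : IsMaximalQuadraticModule Q) {a : A} (ha : a ∉ Q) :
    ∃ q ∈ Q, ∃ s, IsSumSq s ∧ q + s * a = -1 := by
  by_contra! h
  refine ha (hQ.2 ⟨hQ.isQuadraticModule.insert a, fun ⟨q, hq, s, hs, he⟩ => h q hq s hs he.symm⟩
    (subset_qmInsert Q a) (hQ.isQuadraticModule.mem_qmInsert_self a))

theorem mem_or_neg_mem (hQ : IsMaximalQuadraticModule Q) (a : A) : a ∈ Q ∨ -a ∈ Q := by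
  by_contra! h
  have hQM := hQ.isQuadraticModule
  obtain ⟨q₁, hq₁, s₁, hs₁, h₁⟩ := hQ.exists_add_mul_eq_neg_one h.1
  obtain ⟨q₂, hq₂, s₂, hs₂, h₂⟩ := hQ.exists_add_mul_eq_neg_one h.2
  -- two representations of `-1`, from `a` and from `-a`, force `-s₂ ∈ Q` and then `-1 ∈ Q`
  have hns₂ : -s₂ ∈ Q := by
    have : -s₂ = s₂ * q₁ + s₁ * q₂ + s₁ := by linear_combination (-s₂) * h₁ + (-s₁) * h₂
    rw [this]
    exact hQM.add_mem (hQM.add_mem (hQM.isSumSq_mul_mem hs₂ hq₁) (hQM.isSumSq_mul_mem hs₁ hq₂))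
      (hQM.isSumSq_mem hs₁)
  refine hQ.isProper.2 ?_
  have : (-1 : A) = a * a * (s₂ * -s₂) + q₂ + q₂ + q₂ * q₂ * 1 := by
    linear_combination (-(s₂ * a) - 1 - q₂) * h₂
  rw [this]
  exact hQM.add_mem (hQM.add_mem (hQM.add_mem (hQM.mul_self_mul_mem a
    (hQM.isSumSq_mul_mem hs₂ hns₂)) hq₂) hq₂) (hQM.mul_self_mul_mem q₂ hQM.one_mem)

end IsMaximalQuadraticModule

variable [Algebra ℝ A]

def IsArchimedeanQM (Q : Set A) : Prop :=
  ∀ a : A, ∃ N : ℝ, algebraMap ℝ A N - a ∈ Q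

theorem IsArchimedeanQM.mono {Q Q' : Set A} (hA : IsArchimedeanQM Q) (h : Q ⊆ Q') :
    IsArchimedeanQM Q' :=
  fun a => (hA a).imp fun _ hN => h hN

theorem isSumSq_algebraMap {c : ℝ} (hc : 0 ≤ c) : IsSumSq (algebraMap ℝ A c) := by
  rw [← Real.mul_self_sqrt hc, map_mul]
  exact .mul_self _

namespace IsQuadraticModule

variable {Q : Set A}

theorem algebraMap_mul_mem (hQ : IsQuadraticModule Q) {c : ℝ} {a : A} (hc : 0 ≤ c)
    (ha : a ∈ Q) : algebraMap ℝ A c * a ∈ Q :=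
  hQ.isSumSq_mul_mem (isSumSq_algebraMap hc) ha

theorem algebraMap_mem (hQ : IsQuadraticModule Q) {c : ℝ} (hc : 0 ≤ c) :
    algebraMap ℝ A c ∈ Q :=
  hQ.isSumSq_mem (isSumSq_algebraMap hc)

theorem add_algebraMap_mem (hQ : IsQuadraticModule Q) {a : A} {c : ℝ} (ha : a ∈ Q)
    (hc : 0 ≤ c) : a + algebraMap ℝ A c ∈ Q :=
  hQ.add_mem ha (hQ.algebraMap_mem hc)

theorem sub_algebraMap_mem_of_le (hQ : IsQuadraticModule Q) {a : A} {c c' : ℝ}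
    (ha : a - algebraMap ℝ A c ∈ Q) (h : c' ≤ c) : a - algebraMap ℝ A c' ∈ Q := by
  have := hQ.add_algebraMap_mem ha (sub_nonneg.mpr h)
  rwa [map_sub, sub_add_sub_cancel] at this

def boundedSubalgebra (hQ : IsQuadraticModule Q) : Subalgebra ℝ A where
  carrier := {a | ∃ N : ℝ, 0 ≤ N ∧ algebraMap ℝ A N - a * a ∈ Q}
  mul_mem' := by
    rintro a b ⟨N₁, hN₁, ha⟩ ⟨N₂, hN₂, hb⟩
    refine ⟨N₁ * N₂, by positivity, ?_⟩
    have : algebraMap ℝ A (N₁ * N₂) - a * b * (a * b) =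
        algebraMap ℝ A N₂ * (algebraMap ℝ A N₁ - a * a) + a * a * (algebraMap ℝ A N₂ - b * b) := by
      rw [map_mul]; ring
    rw [this]
    exact hQ.add_mem (hQ.algebraMap_mul_mem hN₂ ha) (hQ.mul_self_mul_mem a hb)
  add_mem' := by
    rintro a b ⟨N₁, hN₁, ha⟩ ⟨N₂, hN₂, hb⟩
    refine ⟨2 * N₁ + 2 * N₂, by positivity, ?_⟩
    have : algebraMap ℝ A (2 * N₁ + 2 * N₂) - (a + b) * (a + b) =
        algebraMap ℝ A 2 * (algebraMap ℝ A N₁ - a * a) +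
          algebraMap ℝ A 2 * (algebraMap ℝ A N₂ - b * b) + (a - b) * (a - b) := by
      simp only [map_add, map_mul, map_ofNat]; ring
    rw [this]
    exact hQ.add_mem (hQ.add_mem (hQ.algebraMap_mul_mem zero_le_two ha)
      (hQ.algebraMap_mul_mem zero_le_two hb)) (hQ.isSumSq_mem (.mul_self _))
  algebraMap_mem' c := ⟨c * c, mul_self_nonneg c, by rw [map_mul, sub_self]; exact hQ.zero_mem⟩

theorem isArchimedeanQM_of_boundedSubalgebra_eq_top (hQ : IsQuadraticModule Q)
    (h : hQ.boundedSubalgebra = ⊤) : IsArchimedeanQM Q := by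
  intro a
  obtain ⟨N, -, ha⟩ : a ∈ hQ.boundedSubalgebra := h ▸ Algebra.mem_top
  refine ⟨N + 1 / 4, ?_⟩
  have h2 : 2 * algebraMap ℝ A (1 / 2) = 1 := by
    rw [← map_ofNat (algebraMap ℝ A) 2, ← map_mul]; norm_num
  have h4 : algebraMap ℝ A (1 / 4) = algebraMap ℝ A (1 / 2) * algebraMap ℝ A (1 / 2) := by
    rw [← map_mul]; norm_num
  have : algebraMap ℝ A (N + 1 / 4) - a =
      (a - algebraMap ℝ A (1 / 2)) * (a - algebraMap ℝ A (1 / 2)) + (algebraMap ℝ A N - a * a) := by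
    rw [map_add, h4]
    linear_combination a * h2
  rw [this]
  exact hQ.add_mem (hQ.isSumSq_mem (.mul_self _)) ha

theorem exists_pos_of_isArchimedeanQM (hQ : IsQuadraticModule Q) (hA : IsArchimedeanQM Q)
    (a : A) : ∃ N : ℝ, 0 < N ∧ algebraMap ℝ A N - a ∈ Q := by
  obtain ⟨N, hN⟩ := hA a
  refine ⟨max N 1, lt_max_of_lt_right one_pos, ?_⟩
  have := hQ.add_algebraMap_mem hN (sub_nonneg.mpr (le_max_left N 1))
  rwa [map_sub, sub_add_sub_cancel'] at this

theorem sub_algebraMap_add_mem_of_isSumSq_mul_eq (hQ : IsQuadraticModule Q) {s q G : A}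
    (hs : IsSumSq s) (hq : q ∈ Q) (hsG : s * G = 1 + q) {Bs Bq : ℝ}
    (hBs : algebraMap ℝ A Bs - s ∈ Q) (hBq : algebraMap ℝ A Bq - q ∈ Q) {u l : ℝ} (hu : 0 ≤ u)
    (hl : l ≤ 0) (hul : u * (1 + Bq - l * Bs) ≤ -2 * l) (hG : G - algebraMap ℝ A l ∈ Q) :
    G - algebraMap ℝ A (l + 2 * u) ∈ Q := by
  -- `s * G = 1 + q` cancels the cross terms of `(1 - u s)² (G - l)`
  set c := u * (-2 * l - u * (1 + Bq - l * Bs))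
  have hc : 0 ≤ c := mul_nonneg hu (by linarith)
  have : G - algebraMap ℝ A (l + 2 * u) =
      (1 - algebraMap ℝ A u * s) * (1 - algebraMap ℝ A u * s) * (G - algebraMap ℝ A l) +
        algebraMap ℝ A (2 * u) * q +
        s * (algebraMap ℝ A (u ^ 2 * -l) * (algebraMap ℝ A Bs - s) +
          algebraMap ℝ A (u ^ 2) * (algebraMap ℝ A Bq - q) + algebraMap ℝ A c) := by
    simp only [c, map_add, map_mul, map_sub, map_neg, map_pow, map_ofNat, map_one]
    linear_combination (2 * algebraMap ℝ A u - algebraMap ℝ A u ^ 2 * s) * hsG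
  rw [this]
  refine hQ.add_mem
    (hQ.add_mem (hQ.mul_self_mul_mem _ hG) (hQ.algebraMap_mul_mem (by positivity) hq))
    (hQ.isSumSq_mul_mem hs (hQ.add_algebraMap_mem (hQ.add_mem ?_ ?_) hc))
  · exact hQ.algebraMap_mul_mem (mul_nonneg (sq_nonneg u) (neg_nonneg.mpr hl)) hBs
  · exact hQ.algebraMap_mul_mem (sq_nonneg u) hBq

theorem add_algebraMap_mem_of_isSumSq_mul_eq (hQ : IsQuadraticModule Q) (hA : IsArchimedeanQM Q)
    {s q G : A} (hs : IsSumSq s) (hq : q ∈ Q) (hsG : s * G = 1 + q) {ε : ℝ} (hε : 0 < ε) :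
    G + algebraMap ℝ A ε ∈ Q := by
  obtain ⟨Bs, hBs0, hBs⟩ := hQ.exists_pos_of_isArchimedeanQM hA s
  obtain ⟨Bq, hBq0, hBq⟩ := hQ.exists_pos_of_isArchimedeanQM hA q
  obtain ⟨K, hK0, hK⟩ := hQ.exists_pos_of_isArchimedeanQM hA (-G)
  set u := ε / (1 + Bq + K * Bs)
  have hu : 0 < u := by positivity
  have hL : IsLowerSet {l : ℝ | G - algebraMap ℝ A l ∈ Q} :=
    fun _ _ h hl => hQ.sub_algebraMap_mem_of_le hl h
  suffices -ε ∈ {l : ℝ | G - algebraMap ℝ A l ∈ Q} by simpa using this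
  refine mem_of_isLowerSet_of_forall_add_mem hL (by positivity : 0 < 2 * u)
    (a := -K) (by simpa [add_comm] using hK) fun l hl hKl hlε => ?_
  refine hQ.sub_algebraMap_add_mem_of_isSumSq_mul_eq hs hq hsG hBs hBq hu.le (by linarith) ?_ hl
  have hu_eq : u * (1 + Bq + K * Bs) = ε := div_mul_cancel₀ _ (by positivity)
  have hlK : -l * Bs ≤ K * Bs := mul_le_mul_of_nonneg_right (by linarith) hBs0.le
  nlinarith [mul_le_mul_of_nonneg_left hlK hu.le]

def supportIdeal (hQ : IsQuadraticModule Q) : Ideal A where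
  carrier := {a | a ∈ Q ∧ -a ∈ Q}
  add_mem' := fun ⟨ha, ha'⟩ ⟨hb, hb'⟩ =>
    ⟨hQ.add_mem ha hb, by rw [neg_add]; exact hQ.add_mem ha' hb'⟩
  zero_mem' := ⟨hQ.zero_mem, by rw [neg_zero]; exact hQ.zero_mem⟩
  smul_mem' c a ha := by
    have hmul : ∀ b, b ∈ Q → -b ∈ Q → c * b ∈ Q := fun b hb hb' => by
      have h4 : 4 * algebraMap ℝ A (1 / 4) = 1 := by
        rw [← map_ofNat (algebraMap ℝ A) 4, ← map_mul]; norm_num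
      have : c * b =
          algebraMap ℝ A (1 / 4) * ((c + 1) * (c + 1) * b + (c - 1) * (c - 1) * -b) := by
        linear_combination (-(c * b)) * h4
      rw [this]
      exact hQ.algebraMap_mul_mem (by norm_num)
        (hQ.add_mem (hQ.mul_self_mul_mem _ hb) (hQ.mul_self_mul_mem _ hb'))
    refine ⟨hmul a ha.1 ha.2, ?_⟩
    rw [smul_eq_mul, ← mul_neg]
    exact hmul (-a) ha.2 (by simpa using ha.1)

end IsQuadraticModule

namespace IsProperQuadraticModule

variable {Q : Set A}

theorem algebraMap_not_mem (hQ : IsProperQuadraticModule Q) {c : ℝ} (hc : c < 0) :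
    algebraMap ℝ A c ∉ Q := by
  intro h
  refine hQ.2 ?_
  have : (-1 : A) = algebraMap ℝ A √(-c⁻¹) * algebraMap ℝ A √(-c⁻¹) * algebraMap ℝ A c := by
    rw [← map_mul, ← map_mul, Real.mul_self_sqrt (neg_nonneg.mpr (inv_nonpos.mpr hc.le)),
      neg_mul, inv_mul_cancel₀ hc.ne, map_neg, map_one]
  rw [this]
  exact hQ.1.mul_self_mul_mem _ h

theorem eq_zero_of_algebraMap_mem_supportIdeal (hQ : IsProperQuadraticModule Q) {c : ℝ}
    (h : algebraMap ℝ A c ∈ hQ.1.supportIdeal) : c = 0 := by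
  obtain ⟨h, h'⟩ := h
  rcases lt_trichotomy c 0 with hc | hc | hc
  · exact absurd h (hQ.algebraMap_not_mem hc)
  · exact hc
  · rw [← map_neg] at h'
    exact absurd h' (hQ.algebraMap_not_mem (neg_neg_of_pos hc))

end IsProperQuadraticModule

namespace IsMaximalQuadraticModule

variable {Q : Set A}

theorem mem_of_forall_add_algebraMap_mem (hQ : IsMaximalQuadraticModule Q)
    (hA : IsArchimedeanQM Q) {a : A} (ha : ∀ δ : ℝ, 0 < δ → a + algebraMap ℝ A δ ∈ Q) : a ∈ Q := by
  have hQM := hQ.isQuadraticModule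
  have hQ' : IsProperQuadraticModule {b | ∀ δ : ℝ, 0 < δ → b + algebraMap ℝ A δ ∈ Q} := by
    refine ⟨⟨fun δ hδ => hQM.add_algebraMap_mem hQM.one_mem hδ.le, fun hb hc δ hδ => ?_,
      fun x b hb δ hδ => ?_⟩, fun h => ?_⟩
    · have := hQM.add_mem (hb (δ / 2) (half_pos hδ)) (hc (δ / 2) (half_pos hδ))
      rwa [add_add_add_comm, ← map_add, add_halves] at this
    · obtain ⟨N, hN, hx⟩ := hQM.exists_pos_of_isArchimedeanQM hA (x * x)
      have : x * x * b + algebraMap ℝ A δ = x * x * (b + algebraMap ℝ A (δ / N)) +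
          algebraMap ℝ A (δ / N) * (algebraMap ℝ A N - x * x) := by
        rw [mul_sub, ← map_mul, div_mul_cancel₀ δ hN.ne']
        ring
      rw [this]
      exact hQM.add_mem (hQM.mul_self_mul_mem x (hb _ (by positivity)))
        (hQM.algebraMap_mul_mem (by positivity) hx)
    · refine hQ.isProper.algebraMap_not_mem (c := -1 / 2) (by norm_num) ?_
      convert h (1 / 2) (by norm_num) using 1
      rw [show (-1 / 2 : ℝ) = -1 + 1 / 2 by norm_num, map_add, map_neg, map_one]
  exact hQ.2 hQ' (fun b hb δ hδ => hQM.add_algebraMap_mem hb hδ.le) ha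

theorem existsUnique_sub_algebraMap_mem_supportIdeal (hQ : IsMaximalQuadraticModule Q)
    (hA : IsArchimedeanQM Q) (a : A) :
    ∃! c : ℝ, a - algebraMap ℝ A c ∈ hQ.isQuadraticModule.supportIdeal := by
  have hQM := hQ.isQuadraticModule
  refine existsUnique_of_exists_of_unique ?_ fun c c' hc hc' => ?_
  · set L := {l : ℝ | algebraMap ℝ A l - a ∈ Q}
    have hLbdd : BddBelow L := by
      obtain ⟨N, hN⟩ := hA (-a)
      refine ⟨-N, fun l hl => ?_⟩
      by_contra! hlt
      refine hQ.isProper.algebraMap_not_mem (c := l + N) (by linarith) ?_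
      convert hQM.add_mem hl hN using 1
      rw [map_add]; ring
    refine ⟨sInf L, hQ.mem_of_forall_add_algebraMap_mem hA fun δ hδ => ?_,
      hQ.mem_of_forall_add_algebraMap_mem hA fun δ hδ => ?_⟩
    · have hnot : sInf L - δ ∉ L := fun h => by linarith [csInf_le hLbdd h]
      convert (hQ.mem_or_neg_mem _).resolve_left hnot using 1
      rw [map_sub]; ring
    · obtain ⟨l, hl, hlt⟩ := exists_lt_of_csInf_lt (hA a) (lt_add_of_pos_right (sInf L) hδ)
      convert hQM.add_algebraMap_mem hl (sub_nonneg.mpr hlt.le) using 1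
      simp only [map_sub, map_add]; ring
  · have := hQM.supportIdeal.sub_mem hc' hc
    rw [sub_sub_sub_cancel_left, ← map_sub] at this
    exact sub_eq_zero.mp (hQ.isProper.eq_zero_of_algebraMap_mem_supportIdeal this)

def character (hQ : IsMaximalQuadraticModule Q) (hA : IsArchimedeanQM Q) : A →ₐ[ℝ] ℝ :=
  have h := hQ.existsUnique_sub_algebraMap_mem_supportIdeal hA
  let φ a := (h a).exists.choose
  have hφ a : a - algebraMap ℝ A (φ a) ∈ hQ.isQuadraticModule.supportIdeal :=
    (h a).exists.choose_spec
  { toFun := φ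
    map_one' := (h 1).unique (hφ 1) (by simp)
    map_mul' a b := (h (a * b)).unique (hφ _) <| by
      convert add_mem (Ideal.mul_mem_left _ a (hφ b)) (Ideal.mul_mem_left _ (algebraMap ℝ A (φ b))
        (hφ a)) using 1
      rw [map_mul]; ring
    map_zero' := (h 0).unique (hφ 0) (by simp)
    map_add' a b := (h (a + b)).unique (hφ _) <| by
      rw [map_add, add_sub_add_comm]
      exact add_mem (hφ a) (hφ b)
    commutes' c := (h _).unique (hφ _) (by simp) }

theorem sub_character_mem_supportIdeal (hQ : IsMaximalQuadraticModule Q) (hA : IsArchimedeanQM Q)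
    (a : A) : a - algebraMap ℝ A (hQ.character hA a) ∈ hQ.isQuadraticModule.supportIdeal :=
  (hQ.existsUnique_sub_algebraMap_mem_supportIdeal hA a).exists.choose_spec

theorem character_nonneg (hQ : IsMaximalQuadraticModule Q) (hA : IsArchimedeanQM Q) {a : A}
    (ha : a ∈ Q) : 0 ≤ hQ.character hA a := by
  by_contra! h
  refine hQ.isProper.algebraMap_not_mem h ?_
  simpa using hQ.isQuadraticModule.add_mem ha (hQ.sub_character_mem_supportIdeal hA a).2

end IsMaximalQuadraticModule

theorem exists_algHom_nonneg {Q : Set A} (hQ : IsProperQuadraticModule Q) (hA : IsArchimedeanQM Q) :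
    ∃ φ : A →ₐ[ℝ] ℝ, ∀ a ∈ Q, 0 ≤ φ a := by
  obtain ⟨Q', hQQ', hmax⟩ := exists_isMaximalQuadraticModule hQ
  exact ⟨hmax.character (hA.mono hQQ'), fun a ha => hmax.character_nonneg _ (hQQ' ha)⟩

theorem IsQuadraticModule.add_algebraMap_mem_of_forall_algHom_pos {Q : Set A}
    (hQ : IsQuadraticModule Q) (hA : IsArchimedeanQM Q) {G : A}
    (hG : ∀ φ : A →ₐ[ℝ] ℝ, (∀ a ∈ Q, 0 ≤ φ a) → 0 < φ G) {ε : ℝ} (hε : 0 < ε) :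
    G + algebraMap ℝ A ε ∈ Q := by
  by_cases h : (-1 : A) ∈ qmInsert Q (-G)
  · obtain ⟨q, hq, s, hs, h⟩ := h
    exact hQ.add_algebraMap_mem_of_isSumSq_mul_eq hA hs hq (by linear_combination h) hε
  · obtain ⟨φ, hφ⟩ := exists_algHom_nonneg ⟨hQ.insert (-G), h⟩ (hA.mono (subset_qmInsert Q (-G)))
    have hφG := hφ _ (hQ.mem_qmInsert_self (-G))
    rw [map_neg] at hφG
    linarith [hG φ fun a ha => hφ a (subset_qmInsert Q (-G) ha)]

end QuadraticModule

section Polynomial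

variable {n m : ℕ}

theorem isSOS_iff_isSumSq {f : MvPolynomial (Fin n) ℝ} : IsSOS f ↔ IsSumSq f := by
  refine ⟨fun ⟨r, s, hf⟩ => hf ▸ IsSumSq.sum_sq _ _, fun h => ?_⟩
  induction h with
  | zero => exact ⟨0, finZeroElim, by simp⟩
  | sq_add a _ ih =>
    obtain ⟨r, s, rfl⟩ := ih
    exact ⟨r + 1, Fin.cons a s, by simp [Fin.sum_univ_succ, sq]⟩

theorem inQM_iff {g : Fin m → MvPolynomial (Fin n) ℝ} {p : MvPolynomial (Fin n) ℝ} :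
    InQM g p ↔ ∃ σ₀ : MvPolynomial (Fin n) ℝ, ∃ σ : Fin m → MvPolynomial (Fin n) ℝ,
      IsSumSq σ₀ ∧ (∀ j, IsSumSq (σ j)) ∧ p = σ₀ + ∑ j, σ j * g j := by
  simp only [InQM, isSOS_iff_isSumSq]

theorem isQuadraticModule_inQM (g : Fin m → MvPolynomial (Fin n) ℝ) :
    IsQuadraticModule {p | InQM g p} where
  one_mem := inQM_iff.mpr ⟨1, 0, .one, fun _ => .zero, by simp⟩
  add_mem ha hb := by
    obtain ⟨s₀, s, hs₀, hs, rfl⟩ := inQM_iff.mp ha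
    obtain ⟨t₀, t, ht₀, ht, rfl⟩ := inQM_iff.mp hb
    refine inQM_iff.mpr ⟨s₀ + t₀, s + t, hs₀.add ht₀, fun j => (hs j).add (ht j), ?_⟩
    simp only [Pi.add_apply, add_mul, Finset.sum_add_distrib]
    ring
  mul_self_mul_mem h _ ha := by
    obtain ⟨s₀, s, hs₀, hs, rfl⟩ := inQM_iff.mp ha
    refine inQM_iff.mpr ⟨h * h * s₀, fun j => h * h * s j, (IsSumSq.mul_self h).mul hs₀,
      fun j => (IsSumSq.mul_self h).mul (hs j), ?_⟩
    simp only [mul_add, Finset.mul_sum, mul_assoc]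

theorem inQM_self (g : Fin m → MvPolynomial (Fin n) ℝ) (j : Fin m) : InQM g (g j) := by
  refine inQM_iff.mpr ⟨0, fun i => if i = j then 1 else 0, .zero, fun i => ?_, by simp⟩
  dsimp only
  split_ifs
  exacts [.one, .zero]

theorem isArchimedeanQM_inQM {g : Fin m → MvPolynomial (Fin n) ℝ}
    (harch : ∃ N : ℕ, InQM g ((N : MvPolynomial (Fin n) ℝ) - ∑ i, X i ^ 2)) :
    IsArchimedeanQM {p | InQM g p} := by
  have hQ := isQuadraticModule_inQM g
  refine hQ.isArchimedeanQM_of_boundedSubalgebra_eq_top ?_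
  rw [eq_top_iff, ← adjoin_range_X, Algebra.adjoin_le_iff]
  rintro _ ⟨i, rfl⟩
  obtain ⟨N, hN⟩ := harch
  refine ⟨N, N.cast_nonneg, ?_⟩
  have : algebraMap ℝ _ N - X i * X i =
      ((N : MvPolynomial (Fin n) ℝ) - ∑ j, X j ^ 2) + ∑ j ∈ Finset.univ.erase i, X j * X j := by
    rw [map_natCast, ← Finset.add_sum_erase _ _ (Finset.mem_univ i)]
    simp only [sq]
    ring
  rw [this]
  exact hQ.add_mem hN (hQ.isSumSq_mem (IsSumSq.sum_mul_self _ _))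

theorem algHom_apply_eq_eval (φ : MvPolynomial (Fin n) ℝ →ₐ[ℝ] ℝ) (p : MvPolynomial (Fin n) ℝ) :
    φ p = eval (φ ∘ X) p :=
  DFunLike.congr_fun (aeval_unique φ) p

end Polynomial

theorem stmt_14_general {n m : ℕ} (f : MvPolynomial (Fin n) ℝ) (g : Fin m → MvPolynomial (Fin n) ℝ)
    (S : Set (Fin n → ℝ)) (hS : S = {x | ∀ j, 0 ≤ eval x (g j)})
    (hSne : S.Nonempty) (hScpt : IsCompact S)
    (harch : ∃ N : ℕ, InQM g ((N : MvPolynomial (Fin n) ℝ) - ∑ i, (X i) ^ 2))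
    (hfpos : ∀ x ∈ S, 0 < eval x f) :
    ∃ D : ℕ, Even D ∧ ∃ b : ℝ, 0 < b ∧
      ∃ σ0 : MvPolynomial (Fin n) ℝ, ∃ σ : Fin m → MvPolynomial (Fin n) ℝ,
        IsSOS σ0 ∧ σ0.totalDegree ≤ D ∧
        (∀ j, IsSOS (σ j) ∧ (σ j * g j).totalDegree ≤ D) ∧
        f = C b + σ0 + ∑ j, σ j * g j := by
  obtain ⟨x₀, hx₀, hmin⟩ := hScpt.exists_isMinOn hSne (continuous_eval f).continuousOn
  set μ := eval x₀ f
  have hμ : 0 < μ := hfpos x₀ hx₀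
  have hpos : ∀ φ : MvPolynomial (Fin n) ℝ →ₐ[ℝ] ℝ,
      (∀ p ∈ {p | InQM g p}, 0 ≤ φ p) → 0 < φ (f - C (μ / 2)) := by
    intro φ hφ
    have hx : φ ∘ X ∈ S := hS ▸ fun j => algHom_apply_eq_eval φ (g j) ▸ hφ _ (inQM_self g j)
    rw [algHom_apply_eq_eval, map_sub, eval_C]
    linarith [isMinOn_iff.mp hmin _ hx]
  obtain ⟨σ₀, σ, hσ₀, hσ, hf⟩ := (isQuadraticModule_inQM g).add_algebraMap_mem_of_forall_algHom_pos
    (isArchimedeanQM_inQM harch) hpos (ε := μ / 4) (by positivity)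
  refine ⟨2 * (σ₀.totalDegree + ∑ j, (σ j * g j).totalDegree), even_two_mul _, μ / 4,
    by positivity, σ₀, σ, hσ₀, by omega, fun j => ⟨hσ j, ?_⟩, ?_⟩
  · have := Finset.single_le_sum (fun j _ => Nat.zero_le ((σ j * g j).totalDegree))
      (Finset.mem_univ j)
    omega
  · have hhalf : C (μ / 2) = C (μ / 4) + (C (μ / 4) : MvPolynomial (Fin n) ℝ) := by
      rw [← map_add]; congr 1; ring
    rw [algebraMap_eq] at hf
    linear_combination hf + hhalf

theorem stmt_14 {n m : ℕ} (hn : 1 ≤ n) (d : ℕ)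
    (f : MvPolynomial (Fin n) ℝ) (g : Fin m → MvPolynomial (Fin n) ℝ)
    (hfint : ∀ σ, ∃ z : ℤ, f.coeff σ = (z : ℝ))
    (hgint : ∀ j, ∀ σ, ∃ z : ℤ, (g j).coeff σ = (z : ℝ))
    (hfdeg : f.totalDegree ≤ d) (hgdeg : ∀ j, (g j).totalDegree ≤ d)
    (S : Set (Fin n → ℝ)) (hS : S = {x | ∀ j, 0 ≤ eval x (g j)})
    (hSne : S.Nonempty) (hScpt : IsCompact S)
    (hScube : S ⊆ Set.Icc (-1 : Fin n → ℝ) 1)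
    (hSint : (interior S).Nonempty)
    (harch : ∃ N : ℕ, InQM g ((N : MvPolynomial (Fin n) ℝ) - ∑ i, (X i) ^ 2))
    (hfpos : ∀ x ∈ S, 0 < eval x f) :
    ∃ D : ℕ, Even D ∧ ∃ b : ℝ, 0 < b ∧
      ∃ σ0 : MvPolynomial (Fin n) ℝ, ∃ σ : Fin m → MvPolynomial (Fin n) ℝ,
        IsSOS σ0 ∧ σ0.totalDegree ≤ D ∧
        (∀ j, IsSOS (σ j) ∧ (σ j * g j).totalDegree ≤ D) ∧
        f = C b + σ0 + ∑ j, σ j * g j :=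
  stmt_14_general f g S hS hSne hScpt harch hfpos
end
end

section
/- Let n ≥ 1, let Q ⊆ ℕⁿ be a finite set of cardinality r ≥ 1, let ε > 0 be real, and let u ∈ ℝ[X] be a polynomial such that every exponent vector γ in the support of u can be written as γ = α + β with α, β ∈ Q, and such that |u_γ| ≤ ε/r for every γ in the support of u. Then ε·Σ_{α∈Q} X^{2α} + u is a weighted sum of squares: there exist finitely many nonnegative reals c_i and polynomials s_i ∈ ℝ[X] with ε·Σ_{α∈Q} X^{2α} + u = Σ_i c_i s_i²; in particular it is nonnegative on ℝⁿ. -/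
/-!
Write each term `u_γ X^γ` of `u` as `u_γ X^α X^β` with `α, β ∈ Q`. Then
`u_γ X^α X^β + |u_γ|/2 (X^{2α} + X^{2β}) = |u_γ|/2 (X^α ± X^β)^2`, so `u` becomes a sum of squares
once the weights `|u_γ|/2` are added to the squares `X^{2α}` and `X^{2β}`. The `γ` whose first
factor is a fixed `α` are determined by their second factor, so there are at most `#Q` of them, and
`α` collects weight at most `#Q · ε/(2#Q) = ε/2` as a first factor, and likewise as a second
factor. Hence `ε X^{2α}` pays for everything and what is left is a nonnegative multiple of `X^{2α}`.
-/

open MvPolynomial Finset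

theorem IsSumSq.map {R S F : Type*} [NonAssocSemiring R] [NonAssocSemiring S]
    [FunLike F R S] [RingHomClass F R S] (f : F) {s : R} (hs : IsSumSq s) :
    IsSumSq (f s) := by
  induction hs with
  | zero => simp
  | sq_add a _ ih => simpa using ih.sq_add (f a)

theorem IsSumSq.exists_fin_sum_sq {R : Type*} [CommSemiring R] {s : R} (hs : IsSumSq s) :
    ∃ (t : ℕ) (x : Fin t → R), s = ∑ i, x i ^ 2 := by
  induction hs with
  | zero => exact ⟨0, Fin.elim0, by simp⟩
  | sq_add a _ ih =>
    obtain ⟨t, x, rfl⟩ := ih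
    exact ⟨t + 1, Fin.cons a x, by simp [Fin.sum_univ_succ, sq]⟩

theorem Finset.sum_le_card_mul_of_injOn {ι κ R : Type*} [Semiring R] [PartialOrder R]
    [IsOrderedRing R] {s : Finset ι} {t : Finset κ} {g : ι → κ} (hg : Set.MapsTo g s t)
    (hg_inj : Set.InjOn g s) {w : ι → R} {δ : R} (hw : ∀ i ∈ s, w i ≤ δ) (hδ : 0 ≤ δ) :
    ∑ i ∈ s, w i ≤ #t * δ := calc
  ∑ i ∈ s, w i ≤ #s * δ := by simpa using sum_le_card_nsmul s w δ hw
  _ ≤ #t * δ := by gcongr; exact card_le_card_of_injOn g hg hg_inj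

theorem Finset.sum_smul_comp_eq_sum_fiberwise {ι κ R M : Type*} [DecidableEq κ] [Semiring R]
    [AddCommMonoid M] [Module R M] {s : Finset ι} {t : Finset κ} {g : ι → κ}
    (hg : ∀ i ∈ s, g i ∈ t) (c : ι → R) (f : κ → M) :
    ∑ i ∈ s, c i • f (g i) = ∑ j ∈ t, (∑ i ∈ s with g i = j, c i) • f j := by
  simp_rw [sum_smul]
  rw [← sum_fiberwise_of_maps_to hg]
  refine sum_congr rfl fun j _ ↦ sum_congr rfl fun i hi ↦ ?_
  rw [(mem_filter.1 hi).2]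

section RealAlgebra

variable {A : Type*} [CommRing A] [Algebra ℝ A]

theorem isSumSq_smul_sq {c : ℝ} (hc : 0 ≤ c) (x : A) : IsSumSq (c • x ^ 2) :=
  IsSquare.isSumSq ⟨√c • x, by rw [← sq, smul_pow, Real.sq_sqrt hc]⟩

theorem isSumSq_smul_mul_add_abs_div_two_smul (c : ℝ) (x y : A) :
    IsSumSq (c • (x * y) + (|c| / 2) • (x ^ 2 + y ^ 2)) := by
  rcases le_total 0 c with hc | hc
  · convert isSumSq_smul_sq (by positivity : 0 ≤ c / 2) (x + y) using 1
    rw [abs_of_nonneg hc, add_sq', mul_assoc, two_mul]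
    module
  · convert isSumSq_smul_sq (by linarith : 0 ≤ -c / 2) (x - y) using 1
    rw [abs_of_nonpos hc, sub_sq', mul_assoc, two_mul]
    module

end RealAlgebra

section Monomials

variable {σ : Type*} {Q : Finset (σ →₀ ℕ)} {ε : ℝ} {u : MvPolynomial σ ℝ}

theorem sum_abs_coeff_filter_le [DecidableEq σ] (hε : 0 ≤ ε)
    (hsmall : ∀ γ ∈ u.support, |u.coeff γ| ≤ ε / #Q) {f g : (σ →₀ ℕ) → σ →₀ ℕ}
    (hg : ∀ γ ∈ u.support, g γ ∈ Q) (hfg : ∀ γ ∈ u.support, γ = f γ + g γ) (α : σ →₀ ℕ) :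
    ∑ γ ∈ u.support with f γ = α, |u.coeff γ| ≤ ε := by
  have hg_inj : Set.InjOn g ↑{γ ∈ u.support | f γ = α} := by
    intro γ₁ hγ₁ γ₂ hγ₂ h
    simp only [coe_filter, Set.mem_ofPred_eq] at hγ₁ hγ₂
    rw [hfg γ₁ hγ₁.1, hfg γ₂ hγ₂.1, hγ₁.2, hγ₂.2, h]
  calc ∑ γ ∈ u.support with f γ = α, |u.coeff γ|
      ≤ #Q * (ε / #Q) :=
        sum_le_card_mul_of_injOn (fun γ hγ ↦ hg γ (mem_filter.1 hγ).1) hg_inj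
          (fun γ hγ ↦ hsmall γ (mem_filter.1 hγ).1) (by positivity)
    _ ≤ ε := by
        rcases eq_or_ne (#Q : ℝ) 0 with hQ | hQ
        · simpa [hQ] using hε
        · rw [mul_div_cancel₀ _ hQ]

theorem isSumSq_smul_sum_monomial_add_of_split (hε : 0 ≤ ε)
    (hsmall : ∀ γ ∈ u.support, |u.coeff γ| ≤ ε / #Q) {a b : (σ →₀ ℕ) → σ →₀ ℕ}
    (ha : ∀ γ ∈ u.support, a γ ∈ Q) (hb : ∀ γ ∈ u.support, b γ ∈ Q)
    (hab : ∀ γ ∈ u.support, γ = a γ + b γ) :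
    IsSumSq (ε • ∑ α ∈ Q, monomial (α + α) (1 : ℝ) + u) := by
  classical
  set X : (σ →₀ ℕ) → MvPolynomial σ ℝ := fun α ↦ monomial α 1 with hX
  set w : (σ →₀ ℕ) → ℝ := fun γ ↦ |u.coeff γ| / 2
  have hX_add (α β) : X (α + β) = X α * X β := by simp [hX, monomial_mul]
  have hu : ∑ γ ∈ u.support, u.coeff γ • (X (a γ) * X (b γ)) = u := by
    conv_rhs => rw [u.as_sum]
    refine sum_congr rfl fun γ hγ ↦ ?_
    rw [← hX_add, ← hab γ hγ, hX, smul_monomial, smul_eq_mul, mul_one]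
  have hfiber (f : (σ →₀ ℕ) → σ →₀ ℕ) (hf : ∀ γ ∈ u.support, f γ ∈ Q) :
      ∑ γ ∈ u.support, w γ • X (f γ) ^ 2
        = ∑ α ∈ Q, (∑ γ ∈ u.support with f γ = α, w γ) • X α ^ 2 :=
    sum_smul_comp_eq_sum_fiberwise hf w (fun α ↦ X α ^ 2)
  have hwa (α) : ∑ γ ∈ u.support with a γ = α, w γ ≤ ε / 2 := by
    rw [← sum_div]
    gcongr
    exact sum_abs_coeff_filter_le hε hsmall hb hab α
  have hwb (α) : ∑ γ ∈ u.support with b γ = α, w γ ≤ ε / 2 := by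
    rw [← sum_div]
    gcongr
    exact sum_abs_coeff_filter_le hε hsmall ha (fun γ hγ ↦ (hab γ hγ).trans (add_comm _ _)) α
  have key : ε • ∑ α ∈ Q, monomial (α + α) (1 : ℝ) + u
      = ∑ γ ∈ u.support, (u.coeff γ • (X (a γ) * X (b γ)) + w γ • (X (a γ) ^ 2 + X (b γ) ^ 2))
        + ∑ α ∈ Q, (ε - ∑ γ ∈ u.support with a γ = α, w γ
            - ∑ γ ∈ u.support with b γ = α, w γ) • X α ^ 2 := by
    simp only [smul_add, sum_add_distrib, sub_smul, sum_sub_distrib, hu,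
      hfiber a ha, hfiber b hb, smul_sum]
    simp only [sq, ← hX_add]
    abel
  rw [key]
  exact (IsSumSq.sum fun γ _ ↦ isSumSq_smul_mul_add_abs_div_two_smul _ _ _).add
    (IsSumSq.sum fun α _ ↦ isSumSq_smul_sq (by linarith [hwa α, hwb α]) _)

theorem isSumSq_smul_sum_monomial_add (hε : 0 ≤ ε)
    (hsupp : ∀ γ ∈ u.support, ∃ α ∈ Q, ∃ β ∈ Q, γ = α + β)
    (hsmall : ∀ γ ∈ u.support, |u.coeff γ| ≤ ε / #Q) :
    IsSumSq (ε • ∑ α ∈ Q, monomial (α + α) (1 : ℝ) + u) := by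
  have hsplit (γ) : ∃ α β, γ ∈ u.support → α ∈ Q ∧ β ∈ Q ∧ γ = α + β := by
    by_cases hγ : γ ∈ u.support
    · obtain ⟨α, hα, β, hβ, rfl⟩ := hsupp γ hγ
      exact ⟨α, β, fun _ ↦ ⟨hα, hβ, rfl⟩⟩
    · exact ⟨0, 0, fun h ↦ (hγ h).elim⟩
  choose a b hab using hsplit
  exact isSumSq_smul_sum_monomial_add_of_split hε hsmall (fun γ hγ ↦ (hab γ hγ).1)
    (fun γ hγ ↦ (hab γ hγ).2.1) (fun γ hγ ↦ (hab γ hγ).2.2)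

end Monomials

theorem stmt_17_general {n : ℕ} (Q : Finset (Fin n →₀ ℕ))
    (ε : ℝ) (hε : 0 < ε) (u : MvPolynomial (Fin n) ℝ)
    (hsupp : ∀ γ ∈ u.support, ∃ α ∈ Q, ∃ β ∈ Q, γ = α + β)
    (hsmall : ∀ γ ∈ u.support, |u.coeff γ| ≤ ε / (Q.card : ℝ)) :
    (∃ (t : ℕ) (c : Fin t → ℝ) (s : Fin t → MvPolynomial (Fin n) ℝ),
      (∀ i, 0 ≤ c i) ∧
      ε • (∑ α ∈ Q, monomial (α + α) (1 : ℝ)) + u = ∑ i, c i • (s i) ^ 2) ∧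
    ∀ x : Fin n → ℝ, 0 ≤ eval x (ε • (∑ α ∈ Q, monomial (α + α) (1 : ℝ)) + u) := by
  have hsos := isSumSq_smul_sum_monomial_add hε.le hsupp hsmall
  refine ⟨?_, fun x ↦ (hsos.map (eval x)).nonneg⟩
  obtain ⟨t, s, hs⟩ := hsos.exists_fin_sum_sq
  exact ⟨t, fun _ ↦ 1, s, fun _ ↦ zero_le_one, by simpa using hs⟩

theorem stmt_17 {n : ℕ} (hn : 1 ≤ n) (Q : Finset (Fin n →₀ ℕ)) (hQcard : 1 ≤ Q.card)
    (ε : ℝ) (hε : 0 < ε) (u : MvPolynomial (Fin n) ℝ)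
    (hsupp : ∀ γ ∈ u.support, ∃ α ∈ Q, ∃ β ∈ Q, γ = α + β)
    (hsmall : ∀ γ ∈ u.support, |u.coeff γ| ≤ ε / (Q.card : ℝ)) :
    (∃ (t : ℕ) (c : Fin t → ℝ) (s : Fin t → MvPolynomial (Fin n) ℝ),
      (∀ i, 0 ≤ c i) ∧
      ε • (∑ α ∈ Q, monomial (α + α) (1 : ℝ)) + u = ∑ i, c i • (s i) ^ 2) ∧
    ∀ x : Fin n → ℝ, 0 ≤ eval x (ε • (∑ α ∈ Q, monomial (α + α) (1 : ℝ)) + u) :=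
  stmt_17_general Q ε hε u hsupp hsmall
end
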